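/- arXiv:2510.18995 — 6 statements merged into one kernel-verified Lean document; each statement's English description precedes it below -/
import Mathlib

section
/- Let N be a positive integer. Then Var[ΔY^A_{2N}] = Var[ΔY^S_{2N}] − (1/2)·E[Var(Y^c_{2N} | X)]; equivalently Var[ΔY^S_{2N}] − Var[ΔY^A_{2N}] = (1/2)·‖Y^c_{2N} − E[Y^c_{2N} | X]‖²_{L²} = (1/2)·E[Var(Y^c_{2N} | X)], and in particular this difference is always nonnegative. -/
open MeasureTheory ProbabilityTheory

namespace AntitheticAux

variable {V : Type*} [MeasurableSpace V]

def inl' (N : ℕ) (j : Fin N) : Fin (2*N) := ⟨j.1, by omega⟩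
def inr' (N : ℕ) (j : Fin N) : Fin (2*N) := ⟨N + j.1, by omega⟩

def halfEquiv (N : ℕ) : (Fin N ⊕ Fin N) ≃ Fin (2*N) where
  toFun := Sum.elim (inl' N) (inr' N)
  invFun i := if h : i.1 < N then .inl ⟨i.1, h⟩ else .inr ⟨i.1 - N, by omega⟩
  left_inv p := by
    rcases p with j | j
    · simp [inl', j.2]
    · have : ¬ (N + j.1 < N) := by omega
      simp [inr', this]
  right_inv i := by
    by_cases h : i.1 < N
    · simp [inl', h]
    · simp only [h, dite_false]
      apply Fin.ext
      simp [inr']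
      omega

def swapHalf (N : ℕ) : Equiv.Perm (Fin (2*N)) :=
  (halfEquiv N).symm.trans ((Equiv.sumComm (Fin N) (Fin N)).trans (halfEquiv N))

lemma halfEquiv_symm_inl (N : ℕ) (j : Fin N) : (halfEquiv N).symm (inl' N j) = .inl j := by
  rw [show inl' N j = halfEquiv N (.inl j) from rfl, Equiv.symm_apply_apply]

lemma halfEquiv_symm_inr (N : ℕ) (j : Fin N) : (halfEquiv N).symm (inr' N j) = .inr j := by
  rw [show inr' N j = halfEquiv N (.inr j) from rfl, Equiv.symm_apply_apply]

lemma swapHalf_inl (N : ℕ) (j : Fin N) : swapHalf N (inl' N j) = inr' N j := by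
  simp [swapHalf, halfEquiv_symm_inl]; rfl

lemma swapHalf_inr (N : ℕ) (j : Fin N) : swapHalf N (inr' N j) = inl' N j := by
  simp [swapHalf, halfEquiv_symm_inr]; rfl

def J (N : ℕ) (p : (Fin N → V) × (Fin N → V)) : Fin (2*N) → V :=
  fun i => Sum.elim p.1 p.2 ((halfEquiv N).symm i)

lemma J_inl (N : ℕ) (p : (Fin N → V) × (Fin N → V)) (j : Fin N) :
    J N p (inl' N j) = p.1 j := by simp [J, halfEquiv_symm_inl]

lemma J_inr (N : ℕ) (p : (Fin N → V) × (Fin N → V)) (j : Fin N) :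
    J N p (inr' N j) = p.2 j := by simp [J, halfEquiv_symm_inr]

lemma measurable_J (N : ℕ) : Measurable (J (V := V) N) := by
  apply measurable_pi_lambda
  intro i
  rcases h : (halfEquiv N).symm i with j | j <;> simp only [J, h, Sum.elim_inl, Sum.elim_inr]
  · exact (measurable_pi_apply j).comp measurable_fst
  · exact (measurable_pi_apply j).comp measurable_snd

lemma map_J (N : ℕ) (ν : Measure V) [IsProbabilityMeasure ν] :
    ((Measure.pi fun _ : Fin N => ν).prod (Measure.pi fun _ : Fin N => ν)).map (J N)
      = Measure.pi (fun _ : Fin (2*N) => ν) := by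
  refine (Measure.pi_eq fun s hs => ?_).symm
  rw [Measure.map_apply (measurable_J N) (MeasurableSet.univ_pi hs)]
  have hpre : J N ⁻¹' (Set.pi Set.univ s)
      = (Set.pi Set.univ fun j => s (inl' N j)) ×ˢ (Set.pi Set.univ fun j => s (inr' N j)) := by
    ext p
    simp only [Set.mem_preimage, Set.mem_pi, Set.mem_univ, forall_true_left, Set.mem_prod]
    constructor
    · intro h
      exact ⟨fun j => by simpa [J_inl] using h (inl' N j),
             fun j => by simpa [J_inr] using h (inr' N j)⟩
    · rintro ⟨h1, h2⟩ i
      rcases hsi : (halfEquiv N).symm i with j | j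
      · have hi : i = inl' N j := by
          rw [← (halfEquiv N).apply_symm_apply i, hsi]; rfl
        rw [hi, J_inl]; exact h1 j
      · have hi : i = inr' N j := by
          rw [← (halfEquiv N).apply_symm_apply i, hsi]; rfl
        rw [hi, J_inr]; exact h2 j
  rw [hpre, Measure.prod_prod, Measure.pi_pi, Measure.pi_pi,
    show ∏ i : Fin (2*N), ν (s i) = ∏ x : Fin N ⊕ Fin N, ν (s (halfEquiv N x)) from
      (Equiv.prod_comp (halfEquiv N) fun i => ν (s i)).symm,
    Fintype.prod_sum_type]
  rfl

lemma map_perm {ι : Type*} [Fintype ι] (ν : Measure V) [IsProbabilityMeasure ν]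
    (e : Equiv.Perm ι) :
    (Measure.pi fun _ : ι => ν).map (fun u i => u (e i)) = Measure.pi fun _ : ι => ν := by
  refine (Measure.pi_eq fun s hs => ?_).symm
  rw [Measure.map_apply (measurable_pi_lambda _ fun i => measurable_pi_apply (e i))
    (MeasurableSet.univ_pi hs)]
  have hpre : (fun (u : ι → V) i => u (e i)) ⁻¹' Set.pi Set.univ s
      = Set.pi Set.univ (fun j => s (e.symm j)) := by
    ext u
    simp only [Set.mem_preimage, Set.mem_pi, Set.mem_univ, forall_true_left]
    constructor
    · intro h j
      simpa using h (e.symm j)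
    · intro h i
      simpa using h (e i)
  rw [hpre, Measure.pi_pi]
  exact Equiv.prod_comp e.symm fun i => ν (s i)

lemma mul_integrable {α : Type*} [MeasurableSpace α] {μ : Measure α} {g h : α → ℝ}
    (hg : MemLp g 2 μ) (hh : MemLp h 2 μ) : Integrable (fun x => g x * h x) μ := by
  have hint := ((hg.integrable_sq.add hh.integrable_sq).const_mul (1/2 : ℝ))
  refine hint.mono' (hg.1.mul hh.1) (Filter.Eventually.of_forall fun x => ?_)
  simp only [Real.norm_eq_abs, abs_mul, Pi.add_apply]
  nlinarith [sq_nonneg (|g x| - |h x|), sq_abs (g x), sq_abs (h x),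
    abs_nonneg (g x), abs_nonneg (h x)]

end AntitheticAux

open AntitheticAux

/-- Antithetic MLMC levels reduce variance:
`Var[ΔY^A_{2N}] = Var[ΔY^S_{2N}] − (1/2)·E[Var(Y^c_{2N} | X)]`, where
`E[Var(Y^c_{2N}|X)] = E[(Y^c_{2N} − E[Y^c_{2N}|X])²] = ‖Y^c − E[Y^c|X]‖²_{L²}`;
in particular the variance of the antithetic level never exceeds that of the
standard level. -/
theorem antithetic_variance_reduction
    {Ω : Type*} [MeasurableSpace Ω] (P : Measure Ω) [IsProbabilityMeasure P]
    {d q : ℕ} (N : ℕ) (hN : 0 < N)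
    (X : Ω → (Fin d → ℝ)) (U : ℕ → Ω → (Fin q → ℝ))
    (F : (Fin d → ℝ) → (Fin q → ℝ) → ℝ) (f : ℝ → ℝ)
    (hX : Measurable X) (hU : ∀ n, Measurable (U n))
    (hF : Measurable (Function.uncurry F)) (hf : Measurable f)
    -- the `U n`, `n < 2N`, are identically distributed …
    (hUiid : ∀ n < 2 * N, Measure.map (U n) P = Measure.map (U 0) P)
    -- … mutually independent …
    (hUindep : iIndepFun
      (fun n : Fin (2 * N) => U (n : ℕ)) P)
    -- … and (jointly) independent of `X`
    (hXU : IndepFun X (fun ω => fun n : Fin (2 * N) => U (n : ℕ) ω) P)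
    (Yf Yc Yc' : Ω → ℝ)
    (hYf : Yf = fun ω => f ((∑ n ∈ Finset.range (2 * N), F (X ω) (U n ω)) / (2 * N)))
    (hYc : Yc = fun ω => f ((∑ n ∈ Finset.range N, F (X ω) (U n ω)) / N))
    (hYc' : Yc' = fun ω => f ((∑ n ∈ Finset.Ico N (2 * N), F (X ω) (U n ω)) / N))
    (hYfL2 : MemLp Yf 2 P) (hYcL2 : MemLp Yc 2 P) (hYc'L2 : MemLp Yc' 2 P) :
    variance (fun ω => Yf ω - (Yc ω + Yc' ω) / 2) P
      = variance (fun ω => Yf ω - Yc ω) P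
        - (1 / 2) *
          ∫ ω, (Yc ω - (P[Yc|MeasurableSpace.comap X inferInstance]) ω) ^ 2 ∂P ∧
    variance (fun ω => Yf ω - (Yc ω + Yc' ω) / 2) P
      ≤ variance (fun ω => Yf ω - Yc ω) P := by
  classical
  -- basic measurable data
  have hW : Measurable (fun ω => fun n : Fin (2 * N) => U (n : ℕ) ω) :=
    measurable_pi_lambda _ fun n => hU n
  set W : Ω → (Fin (2 * N) → Fin q → ℝ) := fun ω => fun n : Fin (2 * N) => U (n : ℕ) ω
    with hWdef
  set ν : Measure (Fin q → ℝ) := P.map (U 0) with hν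
  haveI : IsProbabilityMeasure ν := Measure.isProbabilityMeasure_map (hU 0).aemeasurable
  set μ : Measure (Fin d → ℝ) := P.map X with hμ
  haveI : IsProbabilityMeasure μ := Measure.isProbabilityMeasure_map hX.aemeasurable
  set π2 : Measure (Fin (2 * N) → Fin q → ℝ) := Measure.pi (fun _ => ν) with hπ2
  set πN : Measure (Fin N → Fin q → ℝ) := Measure.pi (fun _ => ν) with hπN
  set lam : Measure ((Fin d → ℝ) × (Fin (2 * N) → Fin q → ℝ)) := μ.prod π2 with hlam
  set T : Ω → (Fin d → ℝ) × (Fin (2 * N) → Fin q → ℝ) := fun ω => (X ω, W ω) with hTdef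
  have hTm : Measurable T := hX.prodMk hW
  -- the joint law
  have hWlaw : P.map W = π2 := by
    refine (Measure.pi_eq fun s hs => ?_).symm
    rw [Measure.map_apply hW (MeasurableSet.univ_pi hs)]
    have hpre : W ⁻¹' Set.pi Set.univ s = ⋂ i : Fin (2 * N), (fun ω => U (i : ℕ) ω) ⁻¹' s i := by
      ext ω; simp [hWdef, Set.mem_pi]
    rw [hpre, hUindep.meas_iInter fun i => ⟨s i, hs i, rfl⟩]
    refine Finset.prod_congr rfl fun i _ => ?_
    rw [← Measure.map_apply (hU i) (hs i), hUiid i i.isLt]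
  have hTlaw : P.map T = lam := by
    rw [hlam, ← hWlaw, hμ]
    exact (indepFun_iff_map_prod_eq_prod_map_map hX.aemeasurable hW.aemeasurable).mp hXU
  -- the three functions on the product space
  set gA : (Fin d → ℝ) × (Fin (2 * N) → Fin q → ℝ) → ℝ :=
    fun z => f ((∑ j : Fin (2 * N), F z.1 (z.2 j)) / (2 * N)) with hgA
  set gB : (Fin d → ℝ) × (Fin (2 * N) → Fin q → ℝ) → ℝ :=
    fun z => f ((∑ j : Fin N, F z.1 (z.2 (inl' N j))) / N) with hgB
  set gC : (Fin d → ℝ) × (Fin (2 * N) → Fin q → ℝ) → ℝ :=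
    fun z => f ((∑ j : Fin N, F z.1 (z.2 (inr' N j))) / N) with hgC
  have hFz : ∀ i : Fin (2 * N),
      Measurable (fun z : (Fin d → ℝ) × (Fin (2 * N) → Fin q → ℝ) => F z.1 (z.2 i)) :=
    fun i => hF.comp (measurable_fst.prodMk ((measurable_pi_apply i).comp measurable_snd))
  have hgAm : Measurable gA :=
    hf.comp ((Finset.univ.measurable_sum fun j _ => hFz j).div_const _)
  have hgBm : Measurable gB :=
    hf.comp ((Finset.univ.measurable_sum fun j _ => hFz (inl' N j)).div_const _)
  have hgCm : Measurable gC :=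
    hf.comp ((Finset.univ.measurable_sum fun j _ => hFz (inr' N j)).div_const _)
  -- identification of Yf, Yc, Yc'
  have hYfeq : Yf = gA ∘ T := by
    funext ω
    rw [hYf]
    simp only [Function.comp, hgA]
    congr 1
    rw [← Fin.sum_univ_eq_sum_range (fun n => F (X ω) (U n ω)) (2 * N)]
  have hYceq : Yc = gB ∘ T := by
    funext ω
    rw [hYc]
    simp only [Function.comp, hgB]
    congr 1
    rw [← Fin.sum_univ_eq_sum_range (fun n => F (X ω) (U n ω)) N]
    rfl
  have hYc'eq : Yc' = gC ∘ T := by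
    funext ω
    rw [hYc']
    simp only [Function.comp, hgC]
    congr 1
    rw [Finset.sum_Ico_eq_sum_range, show 2 * N - N = N by omega,
      ← Fin.sum_univ_eq_sum_range (fun n => F (X ω) (U (N + n) ω)) N]
    rfl
  -- transfer of integrals and L² bounds
  have key : ∀ g : (Fin d → ℝ) × (Fin (2 * N) → Fin q → ℝ) → ℝ, Measurable g →
      ∫ ω, g (T ω) ∂P = ∫ z, g z ∂lam := by
    intro g hg
    rw [← hTlaw, integral_map hTm.aemeasurable hg.aestronglyMeasurable]
  have hgAL2 : MemLp gA 2 lam := by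
    rw [← hTlaw]
    refine (memLp_map_measure_iff hgAm.aestronglyMeasurable hTm.aemeasurable).mpr ?_
    rw [show gA ∘ T = Yf from hYfeq.symm]; exact hYfL2
  have hgBL2 : MemLp gB 2 lam := by
    rw [← hTlaw]
    refine (memLp_map_measure_iff hgBm.aestronglyMeasurable hTm.aemeasurable).mpr ?_
    rw [show gB ∘ T = Yc from hYceq.symm]; exact hYcL2
  have hgCL2 : MemLp gC 2 lam := by
    rw [← hTlaw]
    refine (memLp_map_measure_iff hgCm.aestronglyMeasurable hTm.aemeasurable).mpr ?_
    rw [show gC ∘ T = Yc' from hYc'eq.symm]; exact hYc'L2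
  -- symmetry: swapping the two halves of the sample
  set Sm : (Fin d → ℝ) × (Fin (2 * N) → Fin q → ℝ) →
      (Fin d → ℝ) × (Fin (2 * N) → Fin q → ℝ) :=
    fun z => (z.1, fun i => z.2 (swapHalf N i)) with hSmdef
  have hSmm : Measurable Sm :=
    measurable_fst.prodMk
      (measurable_pi_lambda _ fun i => (measurable_pi_apply _).comp measurable_snd)
  have hSmap : lam.map Sm = lam := by
    have hid : Sm = Prod.map id (fun (u : Fin (2 * N) → Fin q → ℝ) i => u (swapHalf N i)) := rfl
    rw [hid, hlam, ← Measure.map_prod_map _ _ measurable_id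
      (measurable_pi_lambda _ fun i => measurable_pi_apply _), Measure.map_id, hπ2,
      map_perm ν (swapHalf N)]
  have hSint : ∀ g : (Fin d → ℝ) × (Fin (2 * N) → Fin q → ℝ) → ℝ, Measurable g →
      ∫ z, g (Sm z) ∂lam = ∫ z, g z ∂lam := by
    intro g hg
    conv_rhs => rw [← hSmap]
    rw [integral_map hSmm.aemeasurable hg.aestronglyMeasurable]
  have hgAS : ∀ z, gA (Sm z) = gA z := by
    intro z
    simp only [hgA, hSmdef]
    congr 1
    rw [eq_comm, ← Equiv.sum_comp (swapHalf N) (fun i => F z.1 (z.2 i))]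
  have hgBS : ∀ z, gB (Sm z) = gC z := by
    intro z
    simp only [hgB, hgC, hSmdef]
    congr 2
    exact Finset.sum_congr rfl fun j _ => by rw [swapHalf_inl]
  have hgCS : ∀ z, gC (Sm z) = gB z := by
    intro z
    simp only [hgB, hgC, hSmdef]
    congr 2
    exact Finset.sum_congr rfl fun j _ => by rw [swapHalf_inr]
  have F1 : ∫ z, gC z ∂lam = ∫ z, gB z ∂lam := by
    have h := hSint gB hgBm
    simp only [hgBS] at h
    exact h
  have F2 : ∫ z, gC z ^ 2 ∂lam = ∫ z, gB z ^ 2 ∂lam := by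
    have h := hSint (fun z => gB z ^ 2) (hgBm.pow_const 2)
    simp only [hgBS] at h
    exact h
  have F3 : ∫ z, gA z * gC z ∂lam = ∫ z, gA z * gB z ∂lam := by
    have h := hSint (fun z => gA z * gB z) (hgAm.mul hgBm)
    simp only [hgAS, hgBS] at h
    exact h
  -- the conditional mean H
  set H : (Fin d → ℝ) → ℝ := fun x => ∫ u, gB (x, u) ∂π2 with hHdef
  have hHsm : StronglyMeasurable H := hgBm.stronglyMeasurable.integral_prod_right'
  set φ : (Fin d → ℝ) → (Fin N → Fin q → ℝ) → ℝ :=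
    fun x v => f ((∑ j : Fin N, F x (v j)) / N) with hφdef
  have hgBJ : ∀ (x : Fin d → ℝ) (p : (Fin N → Fin q → ℝ) × (Fin N → Fin q → ℝ)),
      gB (x, J N p) = φ x p.1 := by
    intro x p
    simp only [hgB, hφdef]
    congr 2
    exact Finset.sum_congr rfl fun j _ => by rw [J_inl]
  have hgCJ : ∀ (x : Fin d → ℝ) (p : (Fin N → Fin q → ℝ) × (Fin N → Fin q → ℝ)),
      gC (x, J N p) = φ x p.2 := by
    intro x p
    simp only [hgC, hφdef]
    congr 2
    exact Finset.sum_congr rfl fun j _ => by rw [J_inr]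
  have hmapJ : (πN.prod πN).map (J N) = π2 := map_J N ν
  have hsplit : ∀ x : Fin d → ℝ, H x = ∫ v, φ x v ∂πN := by
    intro x
    simp only [hHdef]
    rw [← hmapJ,
      integral_map (f := fun u => gB (x, u)) (measurable_J N).aemeasurable
        (hgBm.comp measurable_prodMk_left).aestronglyMeasurable]
    simp only [hgBJ]
    have h := integral_prod_mul (μ := πN) (ν := πN) (φ x) (fun _ => (1 : ℝ))
    simpa using h
  have hprodBC : ∀ x : Fin d → ℝ, ∫ u, gB (x, u) * gC (x, u) ∂π2 = H x ^ 2 := by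
    intro x
    rw [← hmapJ,
      integral_map (f := fun u => gB (x, u) * gC (x, u)) (measurable_J N).aemeasurable
        (((hgBm.comp measurable_prodMk_left).mul
          (hgCm.comp measurable_prodMk_left)).aestronglyMeasurable)]
    simp only [hgBJ, hgCJ]
    rw [integral_prod_mul (μ := πN) (ν := πN) (φ x) (φ x), hsplit x, sq]
  -- Fubini facts
  set h2 : ℝ := ∫ x, H x ^ 2 ∂μ with hh2def
  have hgBCint : Integrable (fun z => gB z * gC z) lam := mul_integrable hgBL2 hgCL2
  have F4 : ∫ z, gB z * gC z ∂lam = h2 := by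
    rw [hlam, integral_prod _ hgBCint, hh2def]
    exact integral_congr_ae (Filter.Eventually.of_forall fun x => hprodBC x)
  -- H is square integrable
  have hgB2int : Integrable (fun z => gB z ^ 2) lam := hgBL2.integrable_sq
  have hGint : Integrable (fun x => ∫ u, gB (x, u) ^ 2 ∂π2) μ := by
    have h := (Integrable.integral_prod_left (f := fun z => gB z ^ 2) (by rw [← hlam]; exact hgB2int))
    exact h
  have hae : ∀ᵐ x ∂μ, Integrable (fun u => gB (x, u) ^ 2) π2 := by
    have h := Integrable.prod_right_ae (f := fun z => gB z ^ 2) (by rw [← hlam]; exact hgB2int)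
    exact h
  have hHsqm : StronglyMeasurable (fun x => H x ^ 2) := by
    have h : (fun x => H x ^ 2) = fun x => H x * H x := by funext x; ring
    rw [h]; exact hHsm.mul hHsm
  have hHsq : Integrable (fun x => H x ^ 2) μ := by
    refine hGint.mono' hHsqm.aestronglyMeasurable ?_
    filter_upwards [hae] with x hx
    have hslm : AEStronglyMeasurable (fun u => gB (x, u)) π2 :=
      (hgBm.comp measurable_prodMk_left).aestronglyMeasurable
    have hsl : MemLp (fun u => gB (x, u)) 2 π2 :=
      (memLp_two_iff_integrable_sq hslm).mpr hx
    have h1 := variance_nonneg (fun u => gB (x, u)) π2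
    rw [variance_eq_sub hsl] at h1
    simp only [Pi.pow_apply] at h1
    rw [Real.norm_eq_abs, abs_of_nonneg (sq_nonneg _)]
    have hHx : H x = ∫ u, gB (x, u) ∂π2 := rfl
    rw [hHx]
    linarith
  have hHL2 : MemLp H 2 μ := (memLp_two_iff_integrable_sq hHsm.aestronglyMeasurable).mpr hHsq
  have hfstmap : lam.map Prod.fst = μ := by
    rw [hlam, Measure.map_fst_prod]
    simp
  have hHfstL2 : MemLp (fun z : (Fin d → ℝ) × (Fin (2 * N) → Fin q → ℝ) => H z.1) 2 lam := by
    have h := (memLp_map_measure_iff (f := Prod.fst) hHsm.aestronglyMeasurable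
      measurable_fst.aemeasurable).mp (by rw [hfstmap]; exact hHL2)
    exact h
  have hHfst2int : Integrable (fun z : (Fin d → ℝ) × (Fin (2 * N) → Fin q → ℝ) => H z.1 ^ 2)
      lam := hHfstL2.integrable_sq
  have hint5 : Integrable (fun z => gB z * H z.1) lam := mul_integrable hgBL2 hHfstL2
  have F5 : ∫ z, gB z * H z.1 ∂lam = h2 := by
    rw [hlam, integral_prod _ (by rw [← hlam]; exact hint5), hh2def]
    refine integral_congr_ae (Filter.Eventually.of_forall fun x => ?_)
    show ∫ u, gB (x, u) * H x ∂π2 = H x ^ 2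
    rw [integral_mul_const, sq]
  have F6 : ∫ z, H z.1 ^ 2 ∂lam = h2 := by
    rw [hh2def, ← hfstmap,
      integral_map (f := fun x => H x ^ 2) measurable_fst.aemeasurable
        hHsqm.aestronglyMeasurable]
  -- identify the conditional expectation
  have hle : MeasurableSpace.comap X inferInstance ≤ (inferInstance : MeasurableSpace Ω) :=
    hX.comap_le
  haveI : SigmaFinite (P.trim hle) := by infer_instance
  have hXmX : Measurable[MeasurableSpace.comap X inferInstance] X := fun t ht => ⟨t, ht, rfl⟩
  have hHXint : Integrable (fun ω => H (X ω)) P := by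
    have h := (integrable_map_measure (f := X) (g := H)
      hHsm.aestronglyMeasurable hX.aemeasurable).mp (by rw [← hμ]; exact hHL2.integrable one_le_two)
    exact h
  have hYcint : Integrable Yc P := hYcL2.integrable one_le_two
  have hgBint1 : Integrable gB lam := hgBL2.integrable one_le_two
  have hgAint1 : Integrable gA lam := hgAL2.integrable one_le_two
  have hgCint1 : Integrable gC lam := hgCL2.integrable one_le_two
  have hcond : (fun ω => H (X ω)) =ᵐ[P] P[Yc|MeasurableSpace.comap X inferInstance] := by
    refine ae_eq_condExp_of_forall_setIntegral_eq hle hYcint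
      (fun s _ _ => hHXint.integrableOn) ?_ ?_
    · rintro s ⟨t, ht, rfl⟩ _
      have hXt : X ⁻¹' t = T ⁻¹' (t ×ˢ Set.univ) := by
        ext ω; simp [hTdef]
      have lhs : ∫ ω in X ⁻¹' t, H (X ω) ∂P = ∫ x in t, H x ∂μ := by
        rw [hμ, setIntegral_map ht hHsm.aestronglyMeasurable hX.aemeasurable]
      have rhs : ∫ ω in X ⁻¹' t, Yc ω ∂P = ∫ x in t, H x ∂μ := by
        rw [hYceq]
        have : ∫ ω in X ⁻¹' t, (gB ∘ T) ω ∂P = ∫ z in t ×ˢ Set.univ, gB z ∂lam := by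
          rw [hXt, ← hTlaw,
            setIntegral_map (ht.prod MeasurableSet.univ) hgBm.aestronglyMeasurable
              hTm.aemeasurable]
          rfl
        rw [this, hlam, setIntegral_prod _ (by rw [← hlam]; exact hgBint1.integrableOn)]
        simp only [Measure.restrict_univ]
        rfl
      rw [lhs, rhs]
    · exact StronglyMeasurable.aestronglyMeasurable (hHsm.comp_measurable hXmX)
  -- the L² distance to the conditional mean
  have hI : ∫ ω, (Yc ω - (P[Yc|MeasurableSpace.comap X inferInstance]) ω) ^ 2 ∂P
      = (∫ z, gB z ^ 2 ∂lam) - h2 := by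
    have h1 : ∫ ω, (Yc ω - (P[Yc|MeasurableSpace.comap X inferInstance]) ω) ^ 2 ∂P
        = ∫ ω, (Yc ω - H (X ω)) ^ 2 ∂P :=
      integral_congr_ae (hcond.mono fun ω h => by
        show (Yc ω - (P[Yc|MeasurableSpace.comap X inferInstance]) ω) ^ 2
          = (Yc ω - H (X ω)) ^ 2
        rw [← h])
    rw [h1]
    have hcomp : (fun ω => (Yc ω - H (X ω)) ^ 2)
        = (fun z : (Fin d → ℝ) × (Fin (2 * N) → Fin q → ℝ) => (gB z - H z.1) ^ 2) ∘ T := by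
      funext ω; rw [hYceq]; rfl
    have hstep : ∫ ω, (Yc ω - H (X ω)) ^ 2 ∂P
        = ∫ z, (gB z - H z.1) ^ 2 ∂lam := by
      rw [hcomp]
      exact key _ ((hgBm.sub (hHsm.measurable.comp measurable_fst)).pow_const 2)
    rw [hstep]
    have e : (fun z : (Fin d → ℝ) × (Fin (2 * N) → Fin q → ℝ) => (gB z - H z.1) ^ 2)
        = fun z => (gB z ^ 2 + H z.1 ^ 2) - 2 * (gB z * H z.1) := by
      funext z; ring
    have iBH : Integrable (fun z => gB z ^ 2 + H z.1 ^ 2) lam := hgB2int.add hHfst2int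
    rw [e, integral_sub iBH (hint5.const_mul 2),
      integral_add hgB2int hHfst2int, integral_const_mul, F5, F6]
    ring
  -- moments of the standard level
  have hEfc1 : ∫ ω, (Yf ω - Yc ω) ∂P = (∫ z, gA z ∂lam) - ∫ z, gB z ∂lam := by
    have hcomp : (fun ω => Yf ω - Yc ω)
        = (fun z : (Fin d → ℝ) × (Fin (2 * N) → Fin q → ℝ) => gA z - gB z) ∘ T := by
      funext ω; rw [hYfeq, hYceq]; rfl
    have hstep : ∫ ω, (Yf ω - Yc ω) ∂P = ∫ z, (gA z - gB z) ∂lam := by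
      rw [hcomp]
      exact key _ (hgAm.sub hgBm)
    rw [hstep, integral_sub hgAint1 hgBint1]
  have hEfc2 : ∫ ω, (Yf ω - Yc ω) ^ 2 ∂P
      = (∫ z, gA z ^ 2 ∂lam) + (∫ z, gB z ^ 2 ∂lam) - 2 * ∫ z, gA z * gB z ∂lam := by
    have hcomp : (fun ω => (Yf ω - Yc ω) ^ 2)
        = (fun z : (Fin d → ℝ) × (Fin (2 * N) → Fin q → ℝ) => (gA z - gB z) ^ 2) ∘ T := by
      funext ω; rw [hYfeq, hYceq]; rfl
    have hstep : ∫ ω, (Yf ω - Yc ω) ^ 2 ∂P = ∫ z, (gA z - gB z) ^ 2 ∂lam := by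
      rw [hcomp]
      exact key _ ((hgAm.sub hgBm).pow_const 2)
    rw [hstep]
    have e : (fun z : (Fin d → ℝ) × (Fin (2 * N) → Fin q → ℝ) => (gA z - gB z) ^ 2)
        = fun z => (gA z ^ 2 + gB z ^ 2) - 2 * (gA z * gB z) := by
      funext z; ring
    have iAB2 : Integrable (fun z => gA z ^ 2 + gB z ^ 2) lam :=
      hgAL2.integrable_sq.add hgB2int
    rw [e, integral_sub iAB2 ((mul_integrable hgAL2 hgBL2).const_mul 2),
      integral_add hgAL2.integrable_sq hgB2int, integral_const_mul]
  -- moments of the antithetic level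
  have hEa1 : ∫ ω, (Yf ω - (Yc ω + Yc' ω) / 2) ∂P = (∫ z, gA z ∂lam) - ∫ z, gB z ∂lam := by
    have hcomp : (fun ω => Yf ω - (Yc ω + Yc' ω) / 2)
        = (fun z : (Fin d → ℝ) × (Fin (2 * N) → Fin q → ℝ) => gA z - (gB z + gC z) / 2) ∘ T := by
      funext ω; rw [hYfeq, hYceq, hYc'eq]; rfl
    have hstep : ∫ ω, (Yf ω - (Yc ω + Yc' ω) / 2) ∂P
        = ∫ z, (gA z - (gB z + gC z) / 2) ∂lam := by
      rw [hcomp]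
      exact key _ (hgAm.sub ((hgBm.add hgCm).div_const 2))
    rw [hstep]
    have e : (fun z : (Fin d → ℝ) × (Fin (2 * N) → Fin q → ℝ) => gA z - (gB z + gC z) / 2)
        = fun z => gA z - ((1/2) * gB z + (1/2) * gC z) := by
      funext z; ring
    have iBChalf : Integrable (fun z => (1/2 : ℝ) * gB z + (1/2 : ℝ) * gC z) lam :=
      (hgBint1.const_mul _).add (hgCint1.const_mul _)
    rw [e, integral_sub hgAint1 iBChalf,
      integral_add (hgBint1.const_mul _) (hgCint1.const_mul _), integral_const_mul,
      integral_const_mul, F1]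
    ring
  have hEa2 : ∫ ω, (Yf ω - (Yc ω + Yc' ω) / 2) ^ 2 ∂P
      = (∫ z, gA z ^ 2 ∂lam) + (1/2) * (∫ z, gB z ^ 2 ∂lam) + (1/2) * h2
        - 2 * ∫ z, gA z * gB z ∂lam := by
    have hcomp : (fun ω => (Yf ω - (Yc ω + Yc' ω) / 2) ^ 2)
        = (fun z : (Fin d → ℝ) × (Fin (2 * N) → Fin q → ℝ) =>
            (gA z - (gB z + gC z) / 2) ^ 2) ∘ T := by
      funext ω; rw [hYfeq, hYceq, hYc'eq]; rfl
    have hstep : ∫ ω, (Yf ω - (Yc ω + Yc' ω) / 2) ^ 2 ∂P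
        = ∫ z, (gA z - (gB z + gC z) / 2) ^ 2 ∂lam := by
      rw [hcomp]
      exact key _ ((hgAm.sub ((hgBm.add hgCm).div_const 2)).pow_const 2)
    rw [hstep]
    have e : (fun z : (Fin d → ℝ) × (Fin (2 * N) → Fin q → ℝ) =>
          (gA z - (gB z + gC z) / 2) ^ 2)
        = fun z => (gA z ^ 2 + ((1/4) * gB z ^ 2 + ((1/4) * gC z ^ 2
            + (1/2) * (gB z * gC z)))) - (gA z * gB z + gA z * gC z) := by
      funext z; ring
    have i1 : Integrable (fun z => (1/4 : ℝ) * gC z ^ 2 + (1/2) * (gB z * gC z)) lam :=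
      (hgCL2.integrable_sq.const_mul _).add ((mul_integrable hgBL2 hgCL2).const_mul _)
    have i2 : Integrable (fun z => (1/4 : ℝ) * gB z ^ 2 + ((1/4) * gC z ^ 2
        + (1/2) * (gB z * gC z))) lam := (hgBL2.integrable_sq.const_mul _).add i1
    have iA2i2 : Integrable (fun z => gA z ^ 2 + ((1/4 : ℝ) * gB z ^ 2 + ((1/4) * gC z ^ 2
        + (1/2) * (gB z * gC z)))) lam := hgAL2.integrable_sq.add i2
    have iABAC : Integrable (fun z => gA z * gB z + gA z * gC z) lam :=
      (mul_integrable hgAL2 hgBL2).add (mul_integrable hgAL2 hgCL2)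
    rw [e, integral_sub iA2i2 iABAC,
      integral_add hgAL2.integrable_sq i2,
      integral_add (hgBL2.integrable_sq.const_mul _) i1,
      integral_add (hgCL2.integrable_sq.const_mul _)
        ((mul_integrable hgBL2 hgCL2).const_mul _),
      integral_const_mul, integral_const_mul, integral_const_mul,
      integral_add (mul_integrable hgAL2 hgBL2) (mul_integrable hgAL2 hgCL2),
      F2, F3, F4]
    ring
  -- variances
  have hS2mem : MemLp (fun ω => Yf ω - Yc ω) 2 P := hYfL2.sub hYcL2
  have hA2mem : MemLp (fun ω => Yf ω - (Yc ω + Yc' ω) / 2) 2 P := by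
    have h : (fun ω => Yf ω - (Yc ω + Yc' ω) / 2)
        = fun ω => Yf ω - (1/2 : ℝ) * (Yc ω + Yc' ω) := by funext ω; ring
    rw [h]
    exact hYfL2.sub ((hYcL2.add hYc'L2).const_mul (1/2))
  have hvarS : variance (fun ω => Yf ω - Yc ω) P
      = (∫ z, gA z ^ 2 ∂lam) + (∫ z, gB z ^ 2 ∂lam) - 2 * (∫ z, gA z * gB z ∂lam)
        - ((∫ z, gA z ∂lam) - ∫ z, gB z ∂lam) ^ 2 := by
    rw [variance_eq_sub hS2mem]
    have hpow : ((fun ω => Yf ω - Yc ω) ^ 2) = fun ω => (Yf ω - Yc ω) ^ 2 := rfl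
    rw [hpow, hEfc2, hEfc1]
  have hvarA : variance (fun ω => Yf ω - (Yc ω + Yc' ω) / 2) P
      = (∫ z, gA z ^ 2 ∂lam) + (1/2) * (∫ z, gB z ^ 2 ∂lam) + (1/2) * h2
        - 2 * (∫ z, gA z * gB z ∂lam)
        - ((∫ z, gA z ∂lam) - ∫ z, gB z ∂lam) ^ 2 := by
    rw [variance_eq_sub hA2mem]
    have hpow : ((fun ω => Yf ω - (Yc ω + Yc' ω) / 2) ^ 2)
        = fun ω => (Yf ω - (Yc ω + Yc' ω) / 2) ^ 2 := rfl
    rw [hpow, hEa2, hEa1]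
  have hnn : 0 ≤ ∫ ω, (Yc ω - (P[Yc|MeasurableSpace.comap X inferInstance]) ω) ^ 2 ∂P :=
    integral_nonneg fun ω => sq_nonneg _
  constructor
  · rw [hvarA, hvarS, hI]
    ring
  · rw [hvarA, hvarS]
    rw [hI] at hnn
    linarith
end

section
/- Let N be a positive integer and u ∈ ℝ, and take f(x) = 1_{x ≤ u}. Then Var[ΔY^S_{2N}] − Var[ΔY^A_{2N}] = (1/2)·E[ P(Ê^c_{2N}(X) ≤ u | X)·(1 − P(Ê^c_{2N}(X) ≤ u | X)) ]. -/
open MeasureTheory ProbabilityTheory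

section aux

lemma mlmc_integrable_of_01 {α : Type*} [MeasurableSpace α] {μ : Measure α} [IsFiniteMeasure μ]
    {f : α → ℝ} (hf : Measurable f) (h0 : ∀ a, 0 ≤ f a)
    (h1 : ∀ a, f a ≤ 1) : Integrable f μ := by
  refine Integrable.mono' (integrable_const 1) hf.aestronglyMeasurable ?_
  exact Filter.Eventually.of_forall fun a => by
    rw [Real.norm_eq_abs, abs_of_nonneg (h0 a)]; exact h1 a

lemma mlmc_memLp_two {α : Type*} [MeasurableSpace α] {μ : Measure α} [IsFiniteMeasure μ]
    {f : α → ℝ} (hf : Measurable f) (C : ℝ) (h : ∀ a, |f a| ≤ C) :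
    MemLp f 2 μ :=
  (memLp_top_of_bound hf.aestronglyMeasurable C
    (Filter.Eventually.of_forall fun a => by simpa using h a)).mono_exponent le_top

lemma mlmc_sq_sub (a b : ℝ) (ha : a * a = a) (hb : b * b = b) :
    (a - b) ^ 2 = a + b - 2 * (a * b) := by
  have h : (a - b) ^ 2 = a * a - 2 * (a * b) + b * b := by ring
  rw [h, ha, hb]; ring

lemma mlmc_sq_sub' (a b c : ℝ) (ha : a * a = a) (hb : b * b = b) (hc : c * c = c) :
    (a - (b + c) / 2) ^ 2 = a - a * b - a * c + (b + c + 2 * (b * c)) / 4 := by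
  have h : (a - (b + c) / 2) ^ 2
      = a * a - a * b - a * c + (b * b + c * c + 2 * (b * c)) / 4 := by ring
  rw [h, ha, hb, hc]

end aux


set_option maxHeartbeats 2000000

/-- In the indicator-function case `f = 1_{· ≤ u}`, the variance
reduction obtained by the antithetic MLMC level is
`Var[ΔY^S_{2N}] − Var[ΔY^A_{2N}] = (1/2)·E[P(Ê^c_{2N}(X) ≤ u | X)·(1 − P(Ê^c_{2N}(X) ≤ u | X))]`,
where the conditional probability is the conditional expectation of the indicator
given the σ-algebra generated by `X`. -/
theorem antithetic_variance_reduction_indicator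
    {Ω : Type*} [MeasurableSpace Ω] (P : Measure Ω) [IsProbabilityMeasure P]
    {d q : ℕ} (N : ℕ) (hN : 0 < N) (u : ℝ)
    (X : Ω → (Fin d → ℝ)) (U : ℕ → Ω → (Fin q → ℝ))
    (F : (Fin d → ℝ) → (Fin q → ℝ) → ℝ)
    (hX : Measurable X) (hU : ∀ n, Measurable (U n))
    (hF : Measurable (Function.uncurry F))
    -- the `U n`, `n < 2N`, are identically distributed …
    (hUiid : ∀ n < 2 * N, Measure.map (U n) P = Measure.map (U 0) P)
    -- … mutually independent …
    (hUindep : iIndepFun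
      (fun n : Fin (2 * N) => U (n : ℕ)) P)
    -- … and (jointly) independent of `X`
    (hXU : IndepFun X (fun ω => fun n : Fin (2 * N) => U (n : ℕ) ω) P)
    (Ef Ec Ec' : Ω → ℝ)
    (hEf : Ef = fun ω => (∑ n ∈ Finset.range (2 * N), F (X ω) (U n ω)) / (2 * N))
    (hEc : Ec = fun ω => (∑ n ∈ Finset.range N, F (X ω) (U n ω)) / N)
    (hEc' : Ec' = fun ω => (∑ n ∈ Finset.Ico N (2 * N), F (X ω) (U n ω)) / N)
    (Yf Yc Yc' : Ω → ℝ)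
    (hYf : Yf = fun ω => if Ef ω ≤ u then (1 : ℝ) else 0)
    (hYc : Yc = fun ω => if Ec ω ≤ u then (1 : ℝ) else 0)
    (hYc' : Yc' = fun ω => if Ec' ω ≤ u then (1 : ℝ) else 0)
    -- the conditional probability `P(Ê^c_{2N}(X) ≤ u | X)`
    (p : Ω → ℝ) (hp : p = P[Yc|MeasurableSpace.comap X inferInstance]) :
    variance (fun ω => Yf ω - Yc ω) P
      - variance (fun ω => Yf ω - (Yc ω + Yc' ω) / 2) P
      = (1 / 2) * ∫ ω, p ω * (1 - p ω) ∂P := by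
  classical
  -- notation
  set W : Ω → (Fin (2 * N) → (Fin q → ℝ)) := fun ω n => U (n : ℕ) ω with hWdef
  have hWm : Measurable W := measurable_pi_lambda _ fun i => hU (i : ℕ)
  set ν : Measure (Fin q → ℝ) := P.map (U 0) with hν
  haveI : IsProbabilityMeasure ν := Measure.isProbabilityMeasure_map (hU 0).aemeasurable
  set μ : Measure (Fin d → ℝ) := P.map X with hμ
  haveI : IsProbabilityMeasure μ := Measure.isProbabilityMeasure_map hX.aemeasurable
  set π2 : Measure (Fin (2 * N) → (Fin q → ℝ)) := Measure.pi fun _ => ν with hπ2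
  set πN : Measure (Fin N → (Fin q → ℝ)) := Measure.pi fun _ => ν with hπN
  set Q : Measure ((Fin N → (Fin q → ℝ)) × (Fin N → (Fin q → ℝ))) := πN.prod πN with hQ
  set L : Measure ((Fin d → ℝ) × ((Fin N → (Fin q → ℝ)) × (Fin N → (Fin q → ℝ)))) := μ.prod Q with hL
  -- Step 1 : the law of W is the product measure
  have hW : P.map W = π2 := by
    refine (Measure.pi_eq fun s hs => ?_).symm
    rw [Measure.map_apply hWm (MeasurableSet.univ_pi hs)]
    have hpre : W ⁻¹' Set.pi Set.univ s = ⋂ i ∈ Finset.univ, (fun n : Fin (2 * N) =>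
        U (n : ℕ)) i ⁻¹' s i := by
      ext ω; simp [Set.mem_pi, hWdef]
    rw [hpre, hUindep.measure_inter_preimage_eq_mul Finset.univ (fun i _ => hs i)]
    refine Finset.prod_congr rfl fun i _ => ?_
    rw [← Measure.map_apply (hU _) (hs i), hUiid (i : ℕ) i.isLt]
  -- the block-splitting map
  let e : Fin N ⊕ Fin N ≃ Fin (2 * N) := finSumFinEquiv.trans (finCongr (two_mul N).symm)
  set Ψ : (Fin (2 * N) → (Fin q → ℝ)) → (Fin N → (Fin q → ℝ)) × (Fin N → (Fin q → ℝ)) :=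
    (MeasurableEquiv.sumPiEquivProdPi (fun _ : Fin N ⊕ Fin N => (Fin q → ℝ))) ∘
      (MeasurableEquiv.piCongrLeft (fun _ : Fin (2 * N) => (Fin q → ℝ)) e).symm with hΨdef
  have hΨ : MeasurePreserving Ψ π2 Q :=
    (measurePreserving_sumPiEquivProdPi (fun _ : Fin N ⊕ Fin N => ν)).comp
      ((measurePreserving_piCongrLeft (fun _ : Fin (2 * N) => ν) e).symm _)
  have hΨapp : ∀ w : Fin (2 * N) → (Fin q → ℝ), Ψ w =
      (fun i : Fin N => w ⟨(i : ℕ), by omega⟩, fun i : Fin N => w ⟨N + (i : ℕ), by omega⟩) := by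
    intro w
    have h1 : ∀ j : Fin N ⊕ Fin N,
        ((MeasurableEquiv.piCongrLeft (fun _ : Fin (2 * N) => (Fin q → ℝ)) e).symm w) j = w (e j) := by
      intro j
      simp [MeasurableEquiv.piCongrLeft, Equiv.piCongrLeft_symm_apply]
    have he1 : ∀ i : Fin N, e (Sum.inl i) = (⟨(i : ℕ), by omega⟩ : Fin (2 * N)) := by
      intro i; apply Fin.ext; simp [e, finSumFinEquiv]
    have he2 : ∀ i : Fin N, e (Sum.inr i) = (⟨N + (i : ℕ), by omega⟩ : Fin (2 * N)) := by
      intro i; apply Fin.ext; simp [e, finSumFinEquiv]; omega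
    ext i
    · simp only [hΨdef, MeasurableEquiv.sumPiEquivProdPi, Function.comp_apply,
        MeasurableEquiv.coe_mk, Equiv.sumPiEquivProdPi_apply, h1, he1]
    · simp only [hΨdef, MeasurableEquiv.sumPiEquivProdPi, Function.comp_apply,
        MeasurableEquiv.coe_mk, Equiv.sumPiEquivProdPi_apply, h1, he2]
  -- Step 2 : the law of (X, split W) is μ ⊗ πN ⊗ πN
  set T : Ω → (Fin d → ℝ) × ((Fin N → (Fin q → ℝ)) × (Fin N → (Fin q → ℝ))) := fun ω => (X ω, Ψ (W ω)) with hTdef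
  have hTm : Measurable T := hX.prodMk (hΨ.measurable.comp hWm)
  have hXW : P.map (fun ω => (X ω, W ω)) = μ.prod π2 := by
    have h := (indepFun_iff_map_prod_eq_prod_map_map hX.aemeasurable hWm.aemeasurable).mp hXU
    rw [← hW]; exact h
  have hT : P.map T = L := by
    calc P.map T = (P.map (fun ω => (X ω, W ω))).map (Prod.map id Ψ) := by
          rw [Measure.map_map (measurable_id.prodMap hΨ.measurable) (hX.prodMk hWm)]
          rfl
      _ = (μ.prod π2).map (Prod.map id Ψ) := by rw [hXW]
      _ = L := ((MeasurePreserving.id μ).prod hΨ).map_eq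
  -- the basic functions on the product space
  set g : (Fin d → ℝ) → (Fin N → (Fin q → ℝ)) → ℝ :=
    fun x v => if (∑ i : Fin N, F x (v i)) / (N : ℝ) ≤ u then 1 else 0 with hgdef
  set Gf : (Fin d → ℝ) × ((Fin N → (Fin q → ℝ)) × (Fin N → (Fin q → ℝ))) → ℝ :=
    fun z => if ((∑ i : Fin N, F z.1 (z.2.1 i)) + ∑ i : Fin N, F z.1 (z.2.2 i))
      / (2 * (N : ℝ)) ≤ u then 1 else 0 with hGfdef
  set Gc : (Fin d → ℝ) × ((Fin N → (Fin q → ℝ)) × (Fin N → (Fin q → ℝ))) → ℝ := fun z => g z.1 z.2.1 with hGcdef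
  set Gc' : (Fin d → ℝ) × ((Fin N → (Fin q → ℝ)) × (Fin N → (Fin q → ℝ))) → ℝ := fun z => g z.1 z.2.2 with hGc'def
  have hsum1 : Measurable fun z : (Fin d → ℝ) × ((Fin N → (Fin q → ℝ)) × (Fin N → (Fin q → ℝ))) =>
      ∑ i : Fin N, F z.1 (z.2.1 i) :=
    Finset.measurable_sum _ fun i _ => hF.comp (measurable_fst.prodMk
      ((measurable_pi_apply i).comp (measurable_fst.comp measurable_snd)))
  have hsum2 : Measurable fun z : (Fin d → ℝ) × ((Fin N → (Fin q → ℝ)) × (Fin N → (Fin q → ℝ))) =>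
      ∑ i : Fin N, F z.1 (z.2.2 i) :=
    Finset.measurable_sum _ fun i _ => hF.comp (measurable_fst.prodMk
      ((measurable_pi_apply i).comp (measurable_snd.comp measurable_snd)))
  have hGcm : Measurable Gc := by
    refine Measurable.ite ?_ measurable_const measurable_const
    exact measurableSet_le (hsum1.div_const _) measurable_const
  have hGc'm : Measurable Gc' := by
    refine Measurable.ite ?_ measurable_const measurable_const
    exact measurableSet_le (hsum2.div_const _) measurable_const
  have hGfm : Measurable Gf := by
    refine Measurable.ite ?_ measurable_const measurable_const
    exact measurableSet_le ((hsum1.add hsum2).div_const _) measurable_const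
  -- 0/1 valued functions
  have h01 : ∀ {r : ℝ}, r = 1 ∨ r = 0 → r * r = r := by rintro r (rfl | rfl) <;> ring
  have h01mul : ∀ {r s : ℝ}, r = 1 ∨ r = 0 → s = 1 ∨ s = 0 → r * s = 1 ∨ r * s = 0 := by
    rintro r s (rfl | rfl) (rfl | rfl) <;> norm_num
  have hGf01 : ∀ z, Gf z = 1 ∨ Gf z = 0 := fun z => by
    simp only [hGfdef]; split_ifs <;> simp
  have hGc01 : ∀ z, Gc z = 1 ∨ Gc z = 0 := fun z => by
    simp only [hGcdef, hgdef]; split_ifs <;> simp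
  have hGc'01 : ∀ z, Gc' z = 1 ∨ Gc' z = 0 := fun z => by
    simp only [hGc'def, hgdef]; split_ifs <;> simp
  have int01 : ∀ {f : (Fin d → ℝ) × ((Fin N → (Fin q → ℝ)) × (Fin N → (Fin q → ℝ))) → ℝ},
      Measurable f → (∀ z, f z = 1 ∨ f z = 0) → Integrable f L := by
    intro f hm hf
    exact mlmc_integrable_of_01 hm (fun z => by rcases hf z with h | h <;> simp [h])
      (fun z => by rcases hf z with h | h <;> simp [h])
  have intGf : Integrable Gf L := int01 hGfm hGf01
  have intGc : Integrable Gc L := int01 hGcm hGc01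
  have intGc' : Integrable Gc' L := int01 hGc'm hGc'01
  have intGfGc : Integrable (fun z => Gf z * Gc z) L :=
    int01 (hGfm.mul hGcm) fun z => h01mul (hGf01 z) (hGc01 z)
  have intGfGc' : Integrable (fun z => Gf z * Gc' z) L :=
    int01 (hGfm.mul hGc'm) fun z => h01mul (hGf01 z) (hGc'01 z)
  have intGcGc' : Integrable (fun z => Gc z * Gc' z) L :=
    int01 (hGcm.mul hGc'm) fun z => h01mul (hGc01 z) (hGc'01 z)
  have intS1 : Integrable (fun z => Gf z + Gc z) L := intGf.add intGc
  have intS2 : Integrable (fun z => 2 * (Gf z * Gc z)) L := intGfGc.const_mul 2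
  have intS3 : Integrable (fun z => Gf z - Gf z * Gc z) L := intGf.sub intGfGc
  have intS4 : Integrable (fun z => Gf z - Gf z * Gc z - Gf z * Gc' z) L := intS3.sub intGfGc'
  have intS5 : Integrable (fun z => Gc z + Gc' z) L := intGc.add intGc'
  have intS6 : Integrable (fun z => 2 * (Gc z * Gc' z)) L := intGcGc'.const_mul 2
  have intS7 : Integrable (fun z => Gc z + Gc' z + 2 * (Gc z * Gc' z)) L := intS5.add intS6
  have intS8 : Integrable (fun z => (Gc z + Gc' z + 2 * (Gc z * Gc' z)) / 4) L :=
    intS7.div_const 4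
  have intS9 : Integrable (fun z => (Gc z + Gc' z) / 2) L := intS5.div_const 2
  -- slice measurability and the function h
  have hgxm : ∀ x, Measurable (g x) := fun x =>
    hGcm.comp (measurable_const.prodMk (measurable_id.prodMk measurable_id))
  have hg01 : ∀ x v, g x v = 1 ∨ g x v = 0 := fun x v => by
    simp only [hgdef]; split_ifs <;> simp
  have hg0 : ∀ x v, (0:ℝ) ≤ g x v := fun x v => by rcases hg01 x v with h | h <;> simp [h]
  have hg1 : ∀ x v, g x v ≤ 1 := fun x v => by rcases hg01 x v with h | h <;> simp [h]
  have intgx : ∀ x, Integrable (g x) πN := fun x =>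
    mlmc_integrable_of_01 (hgxm x) (hg0 x) (hg1 x)
  set hfun : (Fin d → ℝ) → ℝ := fun x => ∫ v, g x v ∂πN with hfundef
  have hfunm : Measurable hfun := by
    have hguncurry : Measurable fun zz : (Fin d → ℝ) × (Fin N → (Fin q → ℝ)) =>
        g zz.1 zz.2 := hGcm.comp (measurable_fst.prodMk (measurable_snd.prodMk measurable_snd))
    exact hguncurry.stronglyMeasurable.integral_prod_right'.measurable
  have hfun0 : ∀ x, 0 ≤ hfun x := fun x => integral_nonneg (hg0 x)
  have hfun1 : ∀ x, hfun x ≤ 1 := fun x => by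
    calc ∫ v, g x v ∂πN ≤ ∫ _, (1:ℝ) ∂πN :=
          integral_mono (intgx x) (integrable_const 1) (hg1 x)
      _ = 1 := by simp
  have inthfun : Integrable hfun μ := mlmc_integrable_of_01 hfunm hfun0 hfun1
  have inthfun2 : Integrable (fun x => hfun x * hfun x) μ :=
    mlmc_integrable_of_01 (hfunm.mul hfunm)
      (fun x => mul_nonneg (hfun0 x) (hfun0 x))
      (fun x => mul_le_one₀ (hfun1 x) (hfun0 x) (hfun1 x))
  -- inner integrals
  have innerGc : ∀ x, (∫ y, Gc (x, y) ∂Q) = hfun x := by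
    intro x
    have hint : Integrable (fun y : (Fin N → (Fin q → ℝ)) × (Fin N → (Fin q → ℝ)) =>
        g x y.1) (πN.prod πN) :=
      mlmc_integrable_of_01 ((hgxm x).comp measurable_fst) (fun y => hg0 x y.1)
        (fun y => hg1 x y.1)
    calc (∫ y, Gc (x, y) ∂Q) = ∫ v, ∫ _, g x v ∂πN ∂πN := integral_prod _ hint
      _ = ∫ v, g x v ∂πN := by
          simp only [integral_const, probReal_univ, one_smul]
      _ = hfun x := rfl
  have innerGc' : ∀ x, (∫ y, Gc' (x, y) ∂Q) = hfun x := by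
    intro x
    have hint : Integrable (fun y : (Fin N → (Fin q → ℝ)) × (Fin N → (Fin q → ℝ)) =>
        g x y.2) (πN.prod πN) :=
      mlmc_integrable_of_01 ((hgxm x).comp measurable_snd) (fun y => hg0 x y.2)
        (fun y => hg1 x y.2)
    calc (∫ y, Gc' (x, y) ∂Q) = ∫ _, ∫ v', g x v' ∂πN ∂πN := integral_prod _ hint
      _ = hfun x := by
          simp only [integral_const, probReal_univ, one_smul]; rfl
  have innerB : ∀ x, (∫ y, Gc (x, y) * Gc' (x, y) ∂Q) = hfun x * hfun x := by
    intro x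
    exact integral_prod_mul (g x) (g x)
  have hsymmGf : ∀ x v v', Gf (x, (v', v)) = Gf (x, (v, v')) := by
    intro x v v'; simp only [hGfdef]; rw [add_comm]
  have innerC : ∀ x, (∫ y, Gf (x, y) * Gc' (x, y) ∂Q)
      = ∫ y, Gf (x, y) * Gc (x, y) ∂Q := by
    intro x
    calc (∫ y, Gf (x, y) * Gc' (x, y) ∂Q)
        = ∫ y, (fun z : (Fin N → (Fin q → ℝ)) × (Fin N → (Fin q → ℝ)) =>
            Gf (x, z) * g x z.1) y.swap ∂Q := by
          refine integral_congr_ae (Filter.Eventually.of_forall fun y => ?_)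
          show Gf (x, y) * Gc' (x, y) = Gf (x, (y.2, y.1)) * g x y.2
          rw [hsymmGf x y.2 y.1]
      _ = ∫ z, Gf (x, z) * g x z.1 ∂Q := by rw [hQ]; exact integral_prod_swap (μ := πN) (ν := πN) (fun z => Gf (x, z) * g x z.1)
      _ = ∫ y, Gf (x, y) * Gc (x, y) ∂Q := rfl
  -- the four fundamental numbers
  set m : ℝ := ∫ z, Gf z ∂L with hm_def
  set A : ℝ := ∫ z, Gc z ∂L with hA_def
  set B : ℝ := ∫ z, Gc z * Gc' z ∂L with hB_def
  set C : ℝ := ∫ z, Gf z * Gc z ∂L with hC_def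
  have cA : A = ∫ x, hfun x ∂μ := by
    rw [hA_def, hL, integral_prod _ intGc]
    exact integral_congr_ae (Filter.Eventually.of_forall fun x => innerGc x)
  have cA' : (∫ z, Gc' z ∂L) = A := by
    rw [cA, hL, integral_prod _ intGc']
    exact integral_congr_ae (Filter.Eventually.of_forall fun x => innerGc' x)
  have cB : B = ∫ x, hfun x * hfun x ∂μ := by
    rw [hB_def, hL, integral_prod _ intGcGc']
    exact integral_congr_ae (Filter.Eventually.of_forall fun x => innerB x)
  have cC : (∫ z, Gf z * Gc' z ∂L) = C := by
    rw [hC_def, hL, integral_prod _ intGfGc', integral_prod _ intGfGc]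
    exact integral_congr_ae (Filter.Eventually.of_forall fun x => innerC x)
  -- identification of Yf, Yc, Yc' with functions of T
  have hWU : ∀ (ω) (i : Fin N), W ω ⟨(i : ℕ), by omega⟩ = U (i : ℕ) ω := fun ω i => rfl
  have hYcT : ∀ ω, Yc ω = Gc (T ω) := by
    intro ω
    simp only [hYc, hEc, hGcdef, hTdef, hΨapp, hgdef]
    rw [← Fin.sum_univ_eq_sum_range (fun n => F (X ω) (U n ω)) N]
  have hYc'T : ∀ ω, Yc' ω = Gc' (T ω) := by
    intro ω
    simp only [hYc', hEc', hGc'def, hTdef, hΨapp, hgdef]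
    rw [Finset.sum_Ico_eq_sum_range]
    have h2N : 2 * N - N = N := by omega
    rw [h2N, ← Fin.sum_univ_eq_sum_range (fun n => F (X ω) (U (N + n) ω)) N]
  have hYfT : ∀ ω, Yf ω = Gf (T ω) := by
    intro ω
    simp only [hYf, hEf, hGfdef, hTdef, hΨapp]
    have hsplit : ∑ n ∈ Finset.range (2 * N), F (X ω) (U n ω)
        = (∑ i : Fin N, F (X ω) (U (i : ℕ) ω)) + ∑ i : Fin N, F (X ω) (U (N + (i : ℕ)) ω) := by
      rw [Finset.range_eq_Ico,
        ← Finset.sum_Ico_consecutive (fun n => F (X ω) (U n ω)) (Nat.zero_le N) (by omega),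
        ← Finset.range_eq_Ico, Finset.sum_Ico_eq_sum_range]
      have h2N : 2 * N - N = N := by omega
      rw [h2N, ← Fin.sum_univ_eq_sum_range (fun n => F (X ω) (U n ω)) N,
        ← Fin.sum_univ_eq_sum_range (fun n => F (X ω) (U (N + n) ω)) N]
    rw [hsplit]
  -- transfer of integrals
  have hkey : ∀ φ : (Fin d → ℝ) × ((Fin N → (Fin q → ℝ)) × (Fin N → (Fin q → ℝ))) → ℝ,
      Measurable φ → ∫ ω, φ (T ω) ∂P = ∫ z, φ z ∂L := by
    intro φ hφ
    rw [← hT, integral_map hTm.aemeasurable hφ.aestronglyMeasurable]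
  -- measurability of the random variables
  have hEfm : Measurable Ef := by
    rw [hEf]
    exact (Finset.measurable_sum _ fun n _ => hF.comp (hX.prodMk (hU n))).div_const _
  have hEcm : Measurable Ec := by
    rw [hEc]
    exact (Finset.measurable_sum _ fun n _ => hF.comp (hX.prodMk (hU n))).div_const _
  have hEc'm : Measurable Ec' := by
    rw [hEc']
    exact (Finset.measurable_sum _ fun n _ => hF.comp (hX.prodMk (hU n))).div_const _
  have hYfm : Measurable Yf := by
    rw [hYf]
    exact Measurable.ite (measurableSet_le hEfm measurable_const) measurable_const
      measurable_const
  have hYcm : Measurable Yc := by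
    rw [hYc]
    exact Measurable.ite (measurableSet_le hEcm measurable_const) measurable_const
      measurable_const
  have hYc'm : Measurable Yc' := by
    rw [hYc']
    exact Measurable.ite (measurableSet_le hEc'm measurable_const) measurable_const
      measurable_const
  -- second moments
  have I1 : ∫ ω, (Yf ω - Yc ω) ^ 2 ∂P = m + A - 2 * C := by
    have e1 : (fun ω => (Yf ω - Yc ω) ^ 2)
        = fun ω => (fun z => (Gf z - Gc z) ^ 2) (T ω) :=
      funext fun ω => by rw [hYfT ω, hYcT ω]
    rw [e1, hkey (fun z => (Gf z - Gc z) ^ 2) ((hGfm.sub hGcm).pow_const 2)]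
    have e2 : ∀ z, (Gf z - Gc z) ^ 2 = Gf z + Gc z - 2 * (Gf z * Gc z) := fun z =>
      mlmc_sq_sub _ _ (h01 (hGf01 z)) (h01 (hGc01 z))
    calc (∫ z, (Gf z - Gc z) ^ 2 ∂L)
        = ∫ z, (Gf z + Gc z - 2 * (Gf z * Gc z)) ∂L :=
          integral_congr_ae (Filter.Eventually.of_forall e2)
      _ = m + A - 2 * C := by
          rw [integral_sub intS1 intS2, integral_add intGf intGc, integral_const_mul,
            hm_def, hA_def, hC_def]
  have I2 : ∫ ω, (Yf ω - (Yc ω + Yc' ω) / 2) ^ 2 ∂P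
      = m - C - C + (A + A + 2 * B) / 4 := by
    have e1 : (fun ω => (Yf ω - (Yc ω + Yc' ω) / 2) ^ 2)
        = fun ω => (fun z => (Gf z - (Gc z + Gc' z) / 2) ^ 2) (T ω) :=
      funext fun ω => by rw [hYfT ω, hYcT ω, hYc'T ω]
    rw [e1, hkey (fun z => (Gf z - (Gc z + Gc' z) / 2) ^ 2) ((hGfm.sub ((hGcm.add hGc'm).div_const 2)).pow_const 2)]
    have e2 : ∀ z, (Gf z - (Gc z + Gc' z) / 2) ^ 2
        = Gf z - Gf z * Gc z - Gf z * Gc' z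
          + (Gc z + Gc' z + 2 * (Gc z * Gc' z)) / 4 := fun z =>
      mlmc_sq_sub' _ _ _ (h01 (hGf01 z)) (h01 (hGc01 z)) (h01 (hGc'01 z))
    calc (∫ z, (Gf z - (Gc z + Gc' z) / 2) ^ 2 ∂L)
        = ∫ z, (Gf z - Gf z * Gc z - Gf z * Gc' z
            + (Gc z + Gc' z + 2 * (Gc z * Gc' z)) / 4) ∂L :=
          integral_congr_ae (Filter.Eventually.of_forall e2)
      _ = m - C - C + (A + A + 2 * B) / 4 := by
          rw [integral_add intS4 intS8, integral_sub intS3 intGfGc',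
            integral_sub intGf intGfGc, integral_div, integral_add intS5 intS6,
            integral_add intGc intGc', integral_const_mul, cC, cA', hm_def, hA_def,
            hB_def, hC_def]
  -- first moments
  have M1 : ∫ ω, (Yf ω - Yc ω) ∂P = m - A := by
    have e1 : (fun ω => Yf ω - Yc ω) = fun ω => (fun z => Gf z - Gc z) (T ω) :=
      funext fun ω => by rw [hYfT ω, hYcT ω]
    rw [e1, hkey (fun z => Gf z - Gc z) (hGfm.sub hGcm), integral_sub intGf intGc, hm_def, hA_def]
  have M2 : ∫ ω, (Yf ω - (Yc ω + Yc' ω) / 2) ∂P = m - A := by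
    have e1 : (fun ω => Yf ω - (Yc ω + Yc' ω) / 2)
        = fun ω => (fun z => Gf z - (Gc z + Gc' z) / 2) (T ω) :=
      funext fun ω => by rw [hYfT ω, hYcT ω, hYc'T ω]
    rw [e1, hkey (fun z => Gf z - (Gc z + Gc' z) / 2) (hGfm.sub ((hGcm.add hGc'm).div_const 2)),
      integral_sub intGf intS9, integral_div, integral_add intGc intGc', cA',
      hm_def, hA_def]
    ring
  -- the variances
  have mem1 : MemLp (fun ω => Yf ω - Yc ω) 2 P :=
    mlmc_memLp_two (hYfm.sub hYcm) 2
      (fun ω => by simp only [hYf, hYc]; split_ifs <;> (rw [abs_le]; constructor <;> norm_num))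
  have mem2 : MemLp (fun ω => Yf ω - (Yc ω + Yc' ω) / 2) 2 P :=
    mlmc_memLp_two (hYfm.sub ((hYcm.add hYc'm).div_const 2)) 2
      (fun ω => by simp only [hYf, hYc, hYc']; split_ifs <;> (rw [abs_le]; constructor <;> norm_num))
  have hv1 : variance (fun ω => Yf ω - Yc ω) P = (m + A - 2 * C) - (m - A) ^ 2 := by
    have h2 : P[(fun ω => Yf ω - Yc ω) ^ 2] = m + A - 2 * C := by
      rw [← I1]
      exact integral_congr_ae (Filter.Eventually.of_forall fun ω => by simp)
    rw [variance_eq_sub mem1, h2, M1]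
  have hv2 : variance (fun ω => Yf ω - (Yc ω + Yc' ω) / 2) P
      = (m - C - C + (A + A + 2 * B) / 4) - (m - A) ^ 2 := by
    have h2 : P[(fun ω => Yf ω - (Yc ω + Yc' ω) / 2) ^ 2]
        = m - C - C + (A + A + 2 * B) / 4 := by
      rw [← I2]
      exact integral_congr_ae (Filter.Eventually.of_forall fun ω => by simp)
    rw [variance_eq_sub mem2, h2, M2]
  -- the conditional expectation of Yc given X
  have hmle : MeasurableSpace.comap X inferInstance ≤ (inferInstance : MeasurableSpace Ω) :=
    hX.comap_le
  have intYc : Integrable Yc P :=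
    mlmc_integrable_of_01 hYcm
      (fun ω => by simp only [hYc]; split_ifs <;> norm_num)
      (fun ω => by simp only [hYc]; split_ifs <;> norm_num)
  have inthX : Integrable (fun ω => hfun (X ω)) P :=
    mlmc_integrable_of_01 (hfunm.comp hX) (fun ω => hfun0 _) (fun ω => hfun1 _)
  have hpae : (fun ω => hfun (X ω)) =ᵐ[P] P[Yc|MeasurableSpace.comap X inferInstance] := by
    refine ae_eq_condExp_of_forall_setIntegral_eq hmle intYc
      (fun s _ _ => inthX.integrableOn) (fun s hs _ => ?_) ?_
    · obtain ⟨t, ht, rfl⟩ := hs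
      have l1 : ∫ ω in X ⁻¹' t, hfun (X ω) ∂P = ∫ x in t, hfun x ∂μ :=
        (setIntegral_map ht hfunm.aestronglyMeasurable hX.aemeasurable).symm
      have hpre : X ⁻¹' t = T ⁻¹' (t ×ˢ
          (Set.univ : Set ((Fin N → (Fin q → ℝ)) × (Fin N → (Fin q → ℝ))))) := by
        ext ω; simp [hTdef]
      have l2 : ∫ ω in X ⁻¹' t, Yc ω ∂P = ∫ x in t, hfun x ∂μ := by
        calc ∫ ω in X ⁻¹' t, Yc ω ∂P
            = ∫ ω in T ⁻¹' (t ×ˢ Set.univ), Gc (T ω) ∂P := by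
              rw [← hpre]
              exact integral_congr_ae (Filter.Eventually.of_forall fun ω => hYcT ω)
          _ = ∫ z in t ×ˢ Set.univ, Gc z ∂L := by
              rw [← hT]
              exact (setIntegral_map (ht.prod MeasurableSet.univ)
                hGcm.aestronglyMeasurable hTm.aemeasurable).symm
          _ = ∫ x in t, ∫ y, Gc (x, y) ∂Q ∂μ := by
              rw [hL, setIntegral_prod _ intGc.integrableOn]
              simp only [Measure.restrict_univ]
          _ = ∫ x in t, hfun x ∂μ :=
              integral_congr_ae (Filter.Eventually.of_forall fun x => innerGc x)
      rw [l1, l2]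
    · have hXcomap : @Measurable Ω (Fin d → ℝ) (MeasurableSpace.comap X inferInstance) _ X :=
        Measurable.of_comap_le le_rfl
      exact StronglyMeasurable.aestronglyMeasurable
        (Measurable.stronglyMeasurable (hfunm.comp hXcomap))
  have hp_ae : p =ᵐ[P] fun ω => hfun (X ω) := by rw [hp]; exact hpae.symm
  have hRHS : ∫ ω, p ω * (1 - p ω) ∂P = A - B := by
    have h1 : ∫ ω, p ω * (1 - p ω) ∂P = ∫ ω, hfun (X ω) * (1 - hfun (X ω)) ∂P :=
      integral_congr_ae (hp_ae.mono fun ω h => by simp only [h])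
    have h2 : ∫ ω, hfun (X ω) * (1 - hfun (X ω)) ∂P = ∫ x, hfun x * (1 - hfun x) ∂μ :=
      (integral_map hX.aemeasurable
        ((hfunm.mul (measurable_const.sub hfunm)).aestronglyMeasurable)).symm
    have h3 : ∫ x, hfun x * (1 - hfun x) ∂μ = A - B := by
      have e : ∀ x, hfun x * (1 - hfun x) = hfun x - hfun x * hfun x := fun x => by ring
      rw [integral_congr_ae (Filter.Eventually.of_forall e),
        integral_sub inthfun inthfun2, ← cA, ← cB]
    rw [h1, h2, h3]
  rw [hv1, hv2, hRHS]
  ring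
end

section
/- Fix ε > 0, σ̄_1 > 0 and c_1 ≠ 0, and for τ > 0 let K⁺_τ(ε) denote the unique minimizer of K ↦ σ̄_1²·(τ + K)/(ε² − c_1²/K²) over {K > 0 : c_1²/K² < ε²}, and set J⁺_τ(ε) = σ̄_1² / (ε² − c_1²/K⁺_τ(ε)²). Then, as τ → +∞, K⁺_τ(ε) / [(2τ)^{1/3}·(|c_1|/ε)^{2/3}] → 1 and J⁺_τ(ε) → σ̄_1²/ε². -/
/-- The objective `g(K) = σ̄₁²·(τ + K)/(ε² − c₁²/K²)` of the continuous inner-sample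
optimization for the nested Monte Carlo estimator. -/
noncomputable def nestedObjective (σ1 c1 τ ε K : ℝ) : ℝ :=
  σ1 ^ 2 * (τ + K) / (ε ^ 2 - c1 ^ 2 / K ^ 2)

/-- The feasible set `{K > 0 : c₁²/K² < ε²}`. -/
def nestedFeasible (c1 ε : ℝ) : Set ℝ := {K : ℝ | 0 < K ∧ c1 ^ 2 / K ^ 2 < ε ^ 2}

lemma feasible_eq (c1 ε : ℝ) (hε : 0 < ε) :
    nestedFeasible c1 ε = Set.Ioi (|c1| / ε) := by
  ext K
  simp only [nestedFeasible, Set.mem_setOf_eq, Set.mem_Ioi]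
  constructor
  · rintro ⟨hK, h⟩
    rw [div_lt_iff₀ hε]
    have h2 : c1 ^ 2 < ε ^ 2 * K ^ 2 := by
      rw [div_lt_iff₀ (by positivity)] at h; linarith
    nlinarith [abs_nonneg c1, sq_abs c1, mul_pos hε hK]
  · intro h
    have hc : 0 ≤ |c1| / ε := by positivity
    have hK : 0 < K := lt_of_le_of_lt hc h
    refine ⟨hK, ?_⟩
    rw [div_lt_iff₀ (by positivity)]
    rw [div_lt_iff₀ hε] at h
    nlinarith [sq_abs c1, abs_nonneg c1]

lemma cubic_eq (ε σ1 c1 τ : ℝ) (hε : 0 < ε) (hσ1 : 0 < σ1) (K : ℝ)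
    (hKf : K ∈ nestedFeasible c1 ε)
    (hmin : ∀ K' ∈ nestedFeasible c1 ε,
      nestedObjective σ1 c1 τ ε K ≤ nestedObjective σ1 c1 τ ε K') :
    ε ^ 2 * K ^ 3 = 2 * c1 ^ 2 * τ + 3 * c1 ^ 2 * K := by
  obtain ⟨hK0, hKlt⟩ := hKf
  have hKne : K ≠ 0 := ne_of_gt hK0
  have hD : (0:ℝ) < ε ^ 2 - c1 ^ 2 / K ^ 2 := sub_pos.mpr hKlt
  have hDne : ε ^ 2 - c1 ^ 2 / K ^ 2 ≠ 0 := ne_of_gt hD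
  have hKmem : K ∈ nestedFeasible c1 ε := ⟨hK0, hKlt⟩
  have hmem : nestedFeasible c1 ε ∈ nhds K := by
    rw [feasible_eq c1 ε hε] at hKmem ⊢
    exact Ioi_mem_nhds hKmem
  have hloc : IsLocalMin (nestedObjective σ1 c1 τ ε) K := by
    filter_upwards [hmem] with x hx using hmin x hx
  have hnum : HasDerivAt (fun x : ℝ => σ1 ^ 2 * (τ + x)) (σ1 ^ 2) K := by
    simpa using ((hasDerivAt_id K).const_add τ).const_mul (σ1 ^ 2)
  have hsq : HasDerivAt (fun x : ℝ => x ^ 2) (2 * K) K := by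
    simpa using hasDerivAt_pow 2 K
  have hK2ne : K ^ 2 ≠ 0 := pow_ne_zero 2 hKne
  have hden : HasDerivAt (fun x : ℝ => ε ^ 2 - c1 ^ 2 / x ^ 2)
      (-(c1 ^ 2 * (-(2 * K) / (K ^ 2) ^ 2))) K := by
    have h1 : HasDerivAt (fun x : ℝ => (x ^ 2)⁻¹) (-(2 * K) / (K ^ 2) ^ 2) K :=
      hsq.inv hK2ne
    have h2 := (h1.const_mul (c1 ^ 2)).const_sub (ε ^ 2)
    simpa [div_eq_mul_inv, mul_comm] using h2
  have hg : HasDerivAt (nestedObjective σ1 c1 τ ε)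
      ((σ1 ^ 2 * (ε ^ 2 - c1 ^ 2 / K ^ 2) -
        σ1 ^ 2 * (τ + K) * (-(c1 ^ 2 * (-(2 * K) / (K ^ 2) ^ 2)))) /
        (ε ^ 2 - c1 ^ 2 / K ^ 2) ^ 2) K := by
    exact hnum.div hden hDne
  have hd0 : (σ1 ^ 2 * (ε ^ 2 - c1 ^ 2 / K ^ 2) -
        σ1 ^ 2 * (τ + K) * (-(c1 ^ 2 * (-(2 * K) / (K ^ 2) ^ 2)))) /
        (ε ^ 2 - c1 ^ 2 / K ^ 2) ^ 2 = 0 := by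
    rw [← hg.deriv]
    exact hloc.deriv_eq_zero
  have hD2 : (ε ^ 2 - c1 ^ 2 / K ^ 2) ^ 2 ≠ 0 := pow_ne_zero 2 hDne
  rw [div_eq_zero_iff] at hd0
  rcases hd0 with h | h
  · field_simp at h
    have h2 : (σ1 ^ 2 * K ^ 3) *
        ((ε ^ 2 * K ^ 2 - c1 ^ 2) * K - 2 * c1 ^ 2 * (τ + K)) = 0 := by
      linear_combination K ^ 3 * h
    have hne : σ1 ^ 2 * K ^ 3 ≠ 0 := by positivity
    rcases mul_eq_zero.mp h2 with h3 | h3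
    · exact absurd h3 hne
    · linear_combination h3
  · exact absurd h hD2

/-- If, for every `τ > 0`, `K⁺_τ(ε)` minimizes
`K ↦ σ̄₁²·(τ + K)/(ε² − c₁²/K²)` over `{K > 0 : c₁²/K² < ε²}` and
`J⁺_τ(ε) = σ̄₁²/(ε² − c₁²/K⁺_τ(ε)²)`, then, as `τ → +∞`,
`K⁺_τ(ε)/((2τ)^{1/3}·(|c₁|/ε)^{2/3}) → 1` and `J⁺_τ(ε) → σ̄₁²/ε²`. -/
theorem nested_mc_allocation_tau_to_infty (ε σ1 c1 : ℝ) (hε : 0 < ε)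
    (hσ1 : 0 < σ1) (hc1 : c1 ≠ 0) (Kp : ℝ → ℝ)
    (hKp : ∀ τ > (0 : ℝ), Kp τ ∈ nestedFeasible c1 ε ∧
      ∀ K ∈ nestedFeasible c1 ε, nestedObjective σ1 c1 τ ε (Kp τ) ≤
        nestedObjective σ1 c1 τ ε K)
    (Jp : ℝ → ℝ) (hJp : ∀ τ, Jp τ = σ1 ^ 2 / (ε ^ 2 - c1 ^ 2 / (Kp τ) ^ 2)) :
    Filter.Tendsto
      (fun τ => Kp τ / ((2 * τ) ^ ((1 : ℝ) / 3) * (|c1| / ε) ^ ((2 : ℝ) / 3)))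
      Filter.atTop (nhds 1) ∧
    Filter.Tendsto Jp Filter.atTop (nhds (σ1 ^ 2 / ε ^ 2)) := by
  set a : ℝ := |c1| / ε with ha_def
  have ha : 0 < a := by
    have : 0 < |c1| := abs_pos.mpr hc1
    positivity
  have hc1sq : c1 ^ 2 = a ^ 2 * ε ^ 2 := by
    rw [ha_def]; rw [div_pow]; rw [sq_abs]; field_simp
  -- the cubic equation satisfied by Kp τ, in terms of a
  have hcub : ∀ τ : ℝ, 0 < τ → (Kp τ) ^ 3 = 2 * a ^ 2 * τ + 3 * a ^ 2 * (Kp τ) := by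
    intro τ hτ
    obtain ⟨hmem, hmin⟩ := hKp τ hτ
    have h := cubic_eq ε σ1 c1 τ hε hσ1 (Kp τ) hmem hmin
    rw [hc1sq] at h
    have hε2 : (ε:ℝ) ^ 2 ≠ 0 := by positivity
    apply mul_left_cancel₀ hε2
    linear_combination h
  -- denominator identification
  have hD_eq : ∀ τ : ℝ, 0 < τ →
      (2 * τ) ^ ((1:ℝ)/3) * a ^ ((2:ℝ)/3) = (2 * a ^ 2 * τ) ^ ((1:ℝ)/3) := by
    intro τ hτ
    have ha23 : (a ^ 2 : ℝ) ^ ((1:ℝ)/3) = a ^ ((2:ℝ)/3) := by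
      rw [← Real.rpow_natCast a 2, ← Real.rpow_mul ha.le]
      norm_num
    conv_rhs => rw [show 2 * a ^ 2 * τ = (2 * τ) * a ^ 2 by ring,
      Real.mul_rpow (by positivity) (by positivity)]
    rw [ha23]
  -- cube of M
  have hM3 : ∀ τ : ℝ, 0 < τ → ((2 * a ^ 2 * τ) ^ ((1:ℝ)/3)) ^ (3:ℕ) = 2 * a ^ 2 * τ := by
    intro τ hτ
    rw [← Real.rpow_natCast ((2 * a ^ 2 * τ) ^ ((1:ℝ)/3)) 3,
      ← Real.rpow_mul (by positivity)]
    norm_num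
  -- lower bound
  have hlow : ∀ τ : ℝ, 0 < τ → (2 * a ^ 2 * τ) ^ ((1:ℝ)/3) ≤ Kp τ := by
    intro τ hτ
    obtain ⟨⟨hK0, _⟩, _⟩ := hKp τ hτ
    have h3 : 2 * a ^ 2 * τ ≤ (Kp τ) ^ 3 := by
      have := hcub τ hτ
      nlinarith [mul_pos (mul_pos (by norm_num : (0:ℝ) < 3) (pow_pos ha 2)) hK0]
    calc (2 * a ^ 2 * τ) ^ ((1:ℝ)/3) ≤ ((Kp τ) ^ 3) ^ ((1:ℝ)/3) :=
          Real.rpow_le_rpow (by positivity) h3 (by norm_num)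
      _ = Kp τ := by
          rw [← Real.rpow_natCast (Kp τ) 3, ← Real.rpow_mul hK0.le]
          norm_num
  -- upper bound, for τ ≥ a/2
  have hupp : ∀ τ : ℝ, 0 < τ → a / 2 ≤ τ → Kp τ ≤ (2 * a ^ 2 * τ) ^ ((1:ℝ)/3) + a := by
    intro τ hτ hτ2
    set M : ℝ := (2 * a ^ 2 * τ) ^ ((1:ℝ)/3) with hM_def
    have hM0 : 0 < M := by rw [hM_def]; positivity
    have hMcube : M ^ 3 = 2 * a ^ 2 * τ := hM3 τ hτ
    have hMa : a ≤ M := by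
      have h1 : a ^ 3 ≤ M ^ 3 := by rw [hMcube]; nlinarith [pow_pos ha 2]
      exact le_of_pow_le_pow_left₀ (by norm_num) hM0.le h1
    have hKa : a < Kp τ := by
      obtain ⟨hmem, _⟩ := hKp τ hτ
      rw [feasible_eq c1 ε hε] at hmem
      exact hmem
    by_contra hlt
    push_neg at hlt
    have hcubτ := hcub τ hτ
    have hfac : 0 < (Kp τ) ^ 2 + (Kp τ) * (M + a) + (M + a) ^ 2 - 3 * a ^ 2 := by
      nlinarith [hKa, hMa, ha, hM0]
    have hprod := mul_pos (sub_pos.mpr hlt) hfac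
    have haM : a * (a * a) ≤ a * (M * M) :=
      mul_le_mul_of_nonneg_left (mul_self_le_mul_self ha.le hMa) ha.le
    nlinarith [hprod, hMcube, hcubτ, haM, ha, hM0, hMa]
  -- the denominator tends to atTop
  have hDtop : Filter.Tendsto (fun τ : ℝ => (2 * τ) ^ ((1:ℝ)/3) * a ^ ((2:ℝ)/3))
      Filter.atTop Filter.atTop := by
    apply Filter.Tendsto.atTop_mul_const (by positivity : (0:ℝ) < a ^ ((2:ℝ)/3))
    exact (tendsto_rpow_atTop (by norm_num : (0:ℝ) < 1/3)).comp
      (Filter.tendsto_id.const_mul_atTop (by norm_num : (0:ℝ) < 2))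
  -- Kp tends to atTop
  have hKtop : Filter.Tendsto Kp Filter.atTop Filter.atTop := by
    refine Filter.tendsto_atTop_mono' Filter.atTop ?_ hDtop
    filter_upwards [Filter.eventually_gt_atTop (0:ℝ)] with τ hτ
    rw [hD_eq τ hτ]
    exact hlow τ hτ
  constructor
  · -- ratio tends to 1
    have h1 : Filter.Tendsto (fun τ : ℝ =>
        1 + a / ((2 * τ) ^ ((1:ℝ)/3) * a ^ ((2:ℝ)/3))) Filter.atTop (nhds (1 + 0)) := by
      exact Filter.Tendsto.const_add 1 (Filter.Tendsto.div_atTop tendsto_const_nhds hDtop)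
    rw [show (1:ℝ) + 0 = 1 by norm_num] at h1
    apply tendsto_of_tendsto_of_tendsto_of_le_of_le' tendsto_const_nhds h1
    · filter_upwards [Filter.eventually_gt_atTop (0:ℝ)] with τ hτ
      have hDpos : 0 < (2 * τ) ^ ((1:ℝ)/3) * a ^ ((2:ℝ)/3) := by positivity
      rw [le_div_iff₀ hDpos, one_mul, hD_eq τ hτ]
      exact hlow τ hτ
    · filter_upwards [Filter.eventually_gt_atTop (0:ℝ),
        Filter.eventually_ge_atTop (a/2)] with τ hτ hτ2
      have hDpos : 0 < (2 * τ) ^ ((1:ℝ)/3) * a ^ ((2:ℝ)/3) := by positivity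
      rw [div_le_iff₀ hDpos, add_mul, one_mul, div_mul_cancel₀ _ (ne_of_gt hDpos),
        hD_eq τ hτ]
      exact hupp τ hτ hτ2
  · -- Jp tends to σ1²/ε²
    have hJ : Jp = fun τ => σ1 ^ 2 / (ε ^ 2 - c1 ^ 2 / (Kp τ) ^ 2) := funext hJp
    rw [hJ]
    have hsqtop : Filter.Tendsto (fun τ : ℝ => (Kp τ) ^ 2) Filter.atTop Filter.atTop := by
      have := hKtop.atTop_mul_atTop₀ hKtop
      simpa [sq] using this
    have hinv : Filter.Tendsto (fun τ : ℝ => c1 ^ 2 / (Kp τ) ^ 2)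
        Filter.atTop (nhds 0) :=
      Filter.Tendsto.div_atTop tendsto_const_nhds hsqtop
    have hden : Filter.Tendsto (fun τ : ℝ => ε ^ 2 - c1 ^ 2 / (Kp τ) ^ 2)
        Filter.atTop (nhds (ε ^ 2 - 0)) := tendsto_const_nhds.sub hinv
    have := Filter.Tendsto.div (tendsto_const_nhds (x := σ1 ^ 2)) hden
      (by simp; positivity)
    rw [sub_zero] at this
    exact this
end

section
/- Let s_0 > 0, MR_0 > 0, r_g ∈ ℝ, γ > 0 and A > 0, set φ_0 = MR_0/s_0, and define ψ : (0, ∞) → ℝ by ψ(x) = C − φ_0·x + MR_0·(1 + max(r_g, γ·ln(x/s_0)))·A for an arbitrary constant C ∈ ℝ. Set x_1 = s_0·e^{r_g/γ} and x_2 = s_0·γ·A. Then ψ is nonincreasing on (0, x_1] and nonincreasing on [x_2, ∞); in particular, if x_1 ≥ x_2 then ψ is nonincreasing on all of (0, ∞). -/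
/-- With `φ₀ = MR₀/s₀` and
`ψ(x) = C − φ₀·x + MR₀·(1 + max(r_g, γ·ln(x/s₀)))·A`, setting
`x₁ = s₀·e^{r_g/γ}` and `x₂ = s₀·γ·A`, the loss function `ψ` is nonincreasing
on `(0, x₁]` and on `[x₂, ∞)`; in particular, if `x₁ ≥ x₂` then `ψ` is
nonincreasing on all of `(0, ∞)`. -/
theorem loss_function_antitone (s0 MR0 rg γ A C : ℝ) (hs0 : 0 < s0)
    (hMR0 : 0 < MR0) (hγ : 0 < γ) (hA : 0 < A)
    (φ0 : ℝ) (hφ0 : φ0 = MR0 / s0)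
    (ψ : ℝ → ℝ)
    (hψ : ∀ x, ψ x = C - φ0 * x + MR0 * (1 + max rg (γ * Real.log (x / s0))) * A)
    (x1 x2 : ℝ) (hx1 : x1 = s0 * Real.exp (rg / γ)) (hx2 : x2 = s0 * γ * A) :
    AntitoneOn ψ (Set.Ioc 0 x1) ∧
    AntitoneOn ψ (Set.Ici x2) ∧
    (x2 ≤ x1 → AntitoneOn ψ (Set.Ioi 0)) := by
  have hs0' : s0 ≠ 0 := ne_of_gt hs0
  have hφ0pos : 0 < φ0 := by rw [hφ0]; positivity
  have hx2pos : 0 < x2 := by rw [hx2]; positivity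
  have hx1pos : 0 < x1 := by rw [hx1]; positivity
  -- part 1
  have part1 : AntitoneOn ψ (Set.Ioc 0 x1) := by
    intro x hx y hy hxy
    have hmax : ∀ z : ℝ, 0 < z → z ≤ x1 → max rg (γ * Real.log (z / s0)) = rg := by
      intro z hz hzx1
      apply max_eq_left
      have hz0 : 0 < z / s0 := by positivity
      have : z / s0 ≤ Real.exp (rg / γ) := by
        rw [div_le_iff₀ hs0]
        calc z ≤ x1 := hzx1
        _ = Real.exp (rg / γ) * s0 := by rw [hx1]; ring
      have hl : Real.log (z / s0) ≤ rg / γ := by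
        calc Real.log (z / s0) ≤ Real.log (Real.exp (rg / γ)) :=
              Real.log_le_log hz0 this
        _ = rg / γ := Real.log_exp _
      calc γ * Real.log (z / s0) ≤ γ * (rg / γ) := by
            exact mul_le_mul_of_nonneg_left hl hγ.le
      _ = rg := by field_simp
    rw [hψ, hψ, hmax x hx.1 hx.2, hmax y hy.1 hy.2]
    nlinarith
  -- part 2 key
  have key : ∀ x y : ℝ, x2 ≤ x → x ≤ y → ψ y ≤ ψ x := by
    intro x y hx hxy
    have hx0 : 0 < x := lt_of_lt_of_le hx2pos hx
    have hy0 : 0 < y := lt_of_lt_of_le hx0 hxy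
    set a := γ * Real.log (x / s0) with ha
    set b := γ * Real.log (y / s0) with hb
    have hlogle : Real.log x ≤ Real.log y := Real.log_le_log hx0 hxy
    have hll : Real.log y - Real.log x ≤ (y - x) / x := by
      have h := Real.log_le_sub_one_of_pos (show (0:ℝ) < y / x by positivity)
      rw [Real.log_div (ne_of_gt hy0) (ne_of_gt hx0)] at h
      have : y / x - 1 = (y - x) / x := by field_simp
      linarith [this ▸ h]
    have hba : b - a = γ * (Real.log y - Real.log x) := by
      rw [ha, hb, Real.log_div (ne_of_gt hx0) hs0', Real.log_div (ne_of_gt hy0) hs0']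
      ring
    have hmaxle : max rg b ≤ max rg a + (b - a) := by
      have h1 : 0 ≤ b - a := by nlinarith
      apply max_le
      · linarith [le_max_left rg a]
      · linarith [le_max_right rg a]
    have hdiv : (y - x) / x ≤ (y - x) / x2 := by
      gcongr
    have hstep : MR0 * A * (max rg b - max rg a) ≤ MR0 * A * (γ * ((y - x) / x2)) := by
      apply mul_le_mul_of_nonneg_left _ (by positivity)
      have : γ * (Real.log y - Real.log x) ≤ γ * ((y - x) / x2) := by
        apply mul_le_mul_of_nonneg_left _ hγ.le
        linarith
      linarith
    have heq : MR0 * A * (γ * ((y - x) / x2)) = φ0 * (y - x) := by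
      rw [hφ0, hx2]; field_simp
    rw [hψ, hψ]
    nlinarith
  have part2 : AntitoneOn ψ (Set.Ici x2) := fun x hx y hy hxy => key x y hx hxy
  refine ⟨part1, part2, ?_⟩
  intro h x hx y hy hxy
  by_cases hxle : x ≤ x1
  · by_cases hyle : y ≤ x1
    · exact part1 ⟨hx, hxle⟩ ⟨hy, hyle⟩ hxy
    · have h1 : ψ x1 ≤ ψ x := part1 ⟨hx, hxle⟩ ⟨hx1pos, le_refl x1⟩ hxle
      have h2 : ψ y ≤ ψ x1 := key x1 y h (le_of_not_ge hyle)
      linarith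
  · exact key x y (le_trans h (le_of_not_ge hxle)) hxy
end

section
/- Let s_0 > 0, MR_0 > 0, r_g ∈ ℝ, γ > 0, A > 0 and C ∈ ℝ, set φ_0 = MR_0/s_0 and ψ(x) = C − φ_0·x + MR_0·(1 + max(r_g, γ·ln(x/s_0)))·A for x > 0, and assume e^{r_g/γ} ≥ γ·A. Let N be a standard Gaussian random variable, μ ∈ ℝ, σ > 0, S_1 = s_0·exp(μ − σ²/2 + σ·N), and α ∈ (0, 1). Then the (1 − α)-quantile of ψ(S_1) is given by inf{ v ∈ ℝ : P(ψ(S_1) ≤ v) ≥ 1 − α } = ψ( s_0·exp(μ − σ²/2 + σ·Φ^{−1}(α)) ), where Φ^{−1} is the inverse of the standard normal cumulative distribution function. -/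
open MeasureTheory ProbabilityTheory

/-- Under the monotonicity condition `e^{r_g/γ} ≥ γ·A`, the
`(1 − α)`-quantile (Value-at-Risk) of the one-year own-fund loss `ψ(S₁)`, where
`S₁ = s₀·exp(μ − σ²/2 + σN)` with `N` standard Gaussian, equals
`ψ(s₀·exp(μ − σ²/2 + σ·Φ⁻¹(α)))`; here `Φ⁻¹(α)` is characterized as the real
number `z` with `Φ(z) = α`. -/
theorem scr_closed_formula (s0 MR0 rg γ A C : ℝ) (hs0 : 0 < s0)
    (hMR0 : 0 < MR0) (hγ : 0 < γ) (hA : 0 < A)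
    (φ0 : ℝ) (hφ0 : φ0 = MR0 / s0)
    (ψ : ℝ → ℝ)
    (hψ : ∀ x, ψ x = C - φ0 * x + MR0 * (1 + max rg (γ * Real.log (x / s0))) * A)
    (hmono : γ * A ≤ Real.exp (rg / γ))
    (μ σ : ℝ) (hσ : 0 < σ) (α : ℝ) (hα : α ∈ Set.Ioo (0 : ℝ) 1)
    (z : ℝ) (hz : (gaussianReal 0 1 (Set.Iic z)).toReal = α) :
    sInf {v : ℝ | 1 - α ≤
        (gaussianReal 0 1
          {x : ℝ | ψ (s0 * Real.exp (μ - σ ^ 2 / 2 + σ * x)) ≤ v}).toReal}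
      = ψ (s0 * Real.exp (μ - σ ^ 2 / 2 + σ * z)) := by
  obtain ⟨hα0, hα1⟩ := hα
  have hφ0pos : 0 < φ0 := by rw [hφ0]; positivity
  -- ψ is strictly decreasing on (0, ∞)
  have hψanti : ∀ a b : ℝ, 0 < a → a < b → ψ b < ψ a := by
    intro a b ha hab
    have hb : 0 < b := ha.trans hab
    set m := s0 * Real.exp (rg / γ) with hm
    have hm0 : 0 < m := by positivity
    have hlog_le : ∀ x : ℝ, 0 < x → x ≤ m → γ * Real.log (x / s0) ≤ rg := by
      intro x hx hxm
      have h1 : x / s0 ≤ Real.exp (rg / γ) := by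
        rw [div_le_iff₀ hs0]; rw [hm] at hxm; linarith [mul_comm s0 (Real.exp (rg / γ))]
      have h2 : Real.log (x / s0) ≤ rg / γ := by
        calc Real.log (x / s0) ≤ Real.log (Real.exp (rg / γ)) :=
              Real.log_le_log (by positivity) h1
          _ = rg / γ := Real.log_exp _
      calc γ * Real.log (x / s0) ≤ γ * (rg / γ) := by nlinarith
        _ = rg := by field_simp
    have hlog_ge : ∀ x : ℝ, m ≤ x → rg ≤ γ * Real.log (x / s0) := by
      intro x hx
      have h1 : Real.exp (rg / γ) ≤ x / s0 := by
        rw [le_div_iff₀ hs0]; rw [hm] at hx; linarith [mul_comm s0 (Real.exp (rg / γ))]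
      have h2 : rg / γ ≤ Real.log (x / s0) := by
        calc rg / γ = Real.log (Real.exp (rg / γ)) := (Real.log_exp _).symm
          _ ≤ Real.log (x / s0) := Real.log_le_log (Real.exp_pos _) h1
      calc rg = γ * (rg / γ) := by field_simp
        _ ≤ γ * Real.log (x / s0) := by nlinarith
    have key : ∀ p q : ℝ, m ≤ p → p < q → ψ q < ψ p := by
      intro p q hp hpq
      have hp0 : 0 < p := hm0.trans_le hp
      have hq0 : 0 < q := hp0.trans hpq
      have hmaxp := max_eq_right (hlog_ge p hp)
      have hmaxq := max_eq_right (hlog_ge q (hp.trans hpq.le))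
      rw [hψ p, hψ q, hmaxp, hmaxq]
      have hlogd : Real.log (q / s0) - Real.log (p / s0) = Real.log (q / p) := by
        rw [Real.log_div hq0.ne' hs0.ne', Real.log_div hp0.ne' hs0.ne',
          Real.log_div hq0.ne' hp0.ne']; ring
      have hqp1 : q / p ≠ 1 := by
        intro h; have : q = p := by field_simp at h; linarith
        linarith
      have h1 : Real.log (q / p) < q / p - 1 :=
        Real.log_lt_sub_one_of_pos (by positivity) hqp1
      have h1' : p * Real.log (q / p) < q - p := by
        have := mul_lt_mul_of_pos_left h1 hp0
        have heq : p * (q / p - 1) = q - p := by field_simp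
        linarith [heq ▸ this]
      have hsp : s0 * (γ * A) ≤ p := by
        have : s0 * (γ * A) ≤ m := by
          rw [hm]; exact mul_le_mul_of_nonneg_left hmono hs0.le
        linarith
      have hLpos : 0 < Real.log (q / p) := by
        apply Real.log_pos; rw [lt_div_iff₀ hp0]; linarith
      -- goal: C - φ0*q + MR0*(1+γ*log(q/s0))*A < C - φ0*p + MR0*(1+γ*log(p/s0))*A
      have hkey : MR0 * A * γ * Real.log (q / p) < φ0 * (q - p) := by
        have h2 : s0 * (γ * A) * Real.log (q / p) ≤ p * Real.log (q / p) :=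
          mul_le_mul_of_nonneg_right hsp hLpos.le
        have h3 : s0 * (γ * A) * Real.log (q / p) < q - p := lt_of_le_of_lt h2 h1'
        rw [hφ0]
        rw [div_mul_eq_mul_div, lt_div_iff₀ hs0]
        nlinarith
      have : Real.log (q / s0) = Real.log (p / s0) + Real.log (q / p) := by linarith [hlogd]
      rw [this]; nlinarith
    rcases le_or_gt b m with hbm | hmb
    · have hmaxa := max_eq_left (hlog_le a ha (le_of_lt (lt_of_lt_of_le hab hbm)))
      have hmaxb := max_eq_left (hlog_le b hb hbm)
      rw [hψ a, hψ b, hmaxa, hmaxb]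
      nlinarith
    · rcases le_or_gt m a with hma | ham
      · exact key a b hma hab
      · have h1 : ψ b < ψ m := key m b le_rfl hmb
        have h2 : ψ m < ψ a := by
          have hmaxa := max_eq_left (hlog_le a ha ham.le)
          have hmaxm := max_eq_left (hlog_le m hm0 le_rfl)
          rw [hψ a, hψ m, hmaxa, hmaxm]
          nlinarith
        linarith
  set c := μ - σ ^ 2 / 2 with hc
  set f : ℝ → ℝ := fun x => ψ (s0 * Real.exp (c + σ * x)) with hf
  have hset : ∀ v, {x : ℝ | ψ (s0 * Real.exp (μ - σ ^ 2 / 2 + σ * x)) ≤ v}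
      = {x | f x ≤ v} := fun v => rfl
  have hfanti : StrictAnti f := by
    intro x y hxy
    exact hψanti (s0 * Real.exp (c + σ * x)) (s0 * Real.exp (c + σ * y)) (by positivity)
      (by
        apply mul_lt_mul_of_pos_left _ hs0
        exact Real.exp_lt_exp.mpr (by nlinarith))
  have hfcont : Continuous f := by
    have hfx : f = fun x => C - φ0 * (s0 * Real.exp (c + σ * x))
        + MR0 * (1 + max rg (γ * (c + σ * x))) * A := by
      funext x
      have hdiv : s0 * Real.exp (c + σ * x) / s0 = Real.exp (c + σ * x) := by
        field_simp
      simp only [hf, hψ, hdiv, Real.log_exp]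
    rw [hfx]
    have haff : Continuous fun x : ℝ => c + σ * x :=
      continuous_const.add (continuous_const.mul continuous_id)
    exact (continuous_const.sub (continuous_const.mul
      (continuous_const.mul (Real.continuous_exp.comp haff)))).add
      ((continuous_const.mul (continuous_const.add
        (continuous_const.max (continuous_const.mul haff)))).mul continuous_const)
  set ν := gaussianReal 0 1 with hν
  have hac : ν ≪ volume := gaussianReal_absolutelyContinuous 0 one_ne_zero
  have hac' : (volume : Measure ℝ) ≪ ν := gaussianReal_absolutelyContinuous' 0 one_ne_zero
  have hIioIic : ∀ w : ℝ, ν (Set.Iio w) = ν (Set.Iic w) := by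
    intro w
    have h1 : ν {w} = 0 := hac (Real.volume_singleton)
    have h2 : Set.Iic w = Set.Iio w ∪ {w} := by
      ext x; simp [le_iff_lt_or_eq]
    refine le_antisymm (measure_mono Set.Iio_subset_Iic_self) ?_
    calc ν (Set.Iic w) = ν (Set.Iio w ∪ {w}) := by rw [← h2]
      _ ≤ ν (Set.Iio w) + ν {w} := measure_union_le _ _
      _ = ν (Set.Iio w) := by rw [h1, add_zero]
  have hne_top : ∀ s : Set ℝ, ν s ≠ ⊤ := fun s => measure_ne_top ν s
  have hIci : ∀ w : ℝ, (ν (Set.Ici w)).toReal = 1 - (ν (Set.Iic w)).toReal := by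
    intro w
    have h1 : Set.Ici w = (Set.Iio w)ᶜ := (Set.compl_Iio).symm
    rw [h1, measure_compl measurableSet_Iio (hne_top _), hIioIic w]
    rw [ENNReal.toReal_sub_of_le (measure_mono (Set.subset_univ _)) (hne_top _)]
    simp
  have hIicMono : ∀ w w' : ℝ, w < w' → (ν (Set.Iic w)).toReal < (ν (Set.Iic w')).toReal := by
    intro w w' hww
    have hsplit : Set.Iic w' = Set.Iic w ∪ Set.Ioc w w' := by
      rw [Set.Iic_union_Ioc_eq_Iic hww.le]
    have hdisj : Disjoint (Set.Iic w) (Set.Ioc w w') := by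
      rw [Set.disjoint_left]; intro x hx hx'; exact absurd hx'.1 (not_lt.mpr hx)
    have hIoc0 : ν (Set.Ioc w w') ≠ 0 := by
      intro h0
      have := hac' h0
      rw [Real.volume_Ioc] at this
      rw [ENNReal.ofReal_eq_zero] at this
      linarith
    have : ν (Set.Iic w) < ν (Set.Iic w') := by
      rw [hsplit, measure_union hdisj measurableSet_Ioc]
      exact ENNReal.lt_add_right (hne_top _) hIoc0
    exact ENNReal.toReal_lt_toReal (hne_top _) (hne_top _) |>.mpr this
  -- membership: f z is in the set
  have hmem : 1 - α ≤ (ν {x : ℝ | f x ≤ f z}).toReal := by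
    have hTz : {x : ℝ | f x ≤ f z} = Set.Ici z := by
      ext x
      simp only [Set.mem_setOf_eq, Set.mem_Ici]
      exact hfanti.le_iff_ge
    rw [hTz, hIci z, hz]
  -- lower bound
  have hlb : ∀ v ∈ {v : ℝ | 1 - α ≤ (ν {x : ℝ | f x ≤ v}).toReal}, f z ≤ v := by
    intro v hv
    by_contra hvf
    push_neg at hvf
    have hev : ∀ᶠ x in nhds z, v < f x :=
      hfcont.continuousAt.eventually (eventually_gt_nhds hvf)
    rw [Metric.eventually_nhds_iff] at hev
    obtain ⟨ε, hε, hev⟩ := hev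
    set w := z + ε / 2 with hw
    have hzw : z < w := by rw [hw]; linarith
    have hfw : v < f w := by
      apply hev
      rw [Real.dist_eq, hw]
      rw [abs_of_pos (by linarith : (0:ℝ) < z + ε / 2 - z)]
      linarith
    have hsub : {x : ℝ | f x ≤ v} ⊆ Set.Ici w := by
      intro x hx
      simp only [Set.mem_setOf_eq] at hx
      exact le_of_lt (hfanti.lt_iff_gt.mp (lt_of_le_of_lt hx hfw))
    have h1 : (ν {x : ℝ | f x ≤ v}).toReal ≤ (ν (Set.Ici w)).toReal :=
      ENNReal.toReal_mono (hne_top _) (measure_mono hsub)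
    have h2 : (ν (Set.Ici w)).toReal < 1 - α := by
      rw [hIci w]
      have := hIicMono z w hzw
      rw [hz] at this
      linarith
    have h3 := hv
    simp only [Set.mem_setOf_eq] at h3
    linarith
  -- conclude
  have hmem' : f z ∈ {v : ℝ | 1 - α ≤ (ν {x : ℝ | f x ≤ v}).toReal} := hmem
  show sInf {v : ℝ | 1 - α ≤ (ν {x : ℝ | f x ≤ v}).toReal} = f z
  exact le_antisymm (csInf_le ⟨f z, hlb⟩ hmem') (le_csInf ⟨f z, hmem'⟩ hlb)
end

section
/- Fix τ ≥ 0, an integer K̄ ≥ 1 and positive reals σ̄, V_1, β, J. For each integer R ≥ 1 define μ_R = σ̄/√K̄ + (√V_1 / K̄^{(1+β)/2}) · Σ_{r=2}^{R} 2^{−(1+β)(r−1)/2}, the allocation q^{(R)}_1 = σ̄/(√K̄ · μ_R) and q^{(R)}_r = √V_1 / (K̄^{(1+β)/2} · 2^{(1+β)(r−1)/2} · μ_R) for 2 ≤ r ≤ R, and the costs C̃_τ(R) = J · Σ_{r=1}^{R} q^{(R)}_r · (τ + K̄·2^{r−1}). Then, as R → ∞, the ratio C̃_τ(R)/C̃_0(R)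 converges: to 1 if β ≤ 1, and to 1 + τ/d_∞ if β > 1, where d_∞ = lim_{R→∞} K̄·Σ_{r=1}^{R} q^{(R)}_r·2^{r−1} ∈ (0, ∞). -/
open Filter Finset

private lemma geom_Icc_mono {z : ℝ} (h0 : 0 ≤ z) :
    Monotone (fun R : ℕ => ∑ r ∈ Finset.Icc 2 R, z ^ (r - 1)) := fun _ _ hab =>
  Finset.sum_le_sum_of_subset_of_nonneg (Finset.Icc_subset_Icc_right hab)
    (fun _ _ _ => pow_nonneg h0 _)

private lemma geom_Icc_eq {z : ℝ} (R : ℕ) :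
    ∑ r ∈ Finset.Icc 2 R, z ^ (r - 1) = z * ∑ i ∈ Finset.range (R - 1), z ^ i := by
  rw [← Finset.Ico_add_one_right_eq_Icc, Finset.sum_Ico_eq_sum_range, Finset.mul_sum]
  have hn : R + 1 - 2 = R - 1 := by omega
  rw [hn]
  refine Finset.sum_congr rfl fun i _ => ?_
  have h2 : 2 + i - 1 = i + 1 := by omega
  rw [h2, pow_succ, mul_comm]

private lemma geom_Icc_tendsto {z : ℝ} (h0 : 0 ≤ z) (h1 : z < 1) :
    Tendsto (fun R : ℕ => ∑ r ∈ Finset.Icc 2 R, z ^ (r - 1)) atTop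
      (nhds (z / (1 - z))) := by
  have hsum : Tendsto (fun n : ℕ => ∑ i ∈ Finset.range n, z ^ i) atTop
      (nhds (1 - z)⁻¹) := (hasSum_geometric_of_lt_one h0 h1).tendsto_sum_nat
  have h2 : Tendsto (fun R : ℕ => z * ∑ i ∈ Finset.range (R - 1), z ^ i) atTop
      (nhds (z * (1 - z)⁻¹)) :=
    (hsum.comp (tendsto_sub_atTop_nat 1)).const_mul z
  rw [div_eq_mul_inv]
  exact h2.congr fun R => (geom_Icc_eq R).symm

set_option maxHeartbeats 1600000 in
/-- With the cost-optimal (at `τ = 0`) allocation `q^{(R)}` of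
Statement 18 and approximate costs
`C̃_τ(R) = J·Σ_{r=1}^{R} q^{(R)}_r·(τ + K̄·2^{r−1})`, the ratio `C̃_τ(R)/C̃_0(R)`
converges, as `R → ∞`, to `1` if `β ≤ 1` and to `1 + τ/d_∞` if `β > 1`, where
`d_∞ = lim_{R→∞} K̄·Σ_{r=1}^{R} q^{(R)}_r·2^{r−1} ∈ (0, ∞)`. -/
theorem cost_ratio_asymptotics (τ : ℝ) (hτ : 0 ≤ τ) (Kbar : ℕ) (hKbar : 1 ≤ Kbar)
    (σbar V1 β J : ℝ) (hσ : 0 < σbar) (hV : 0 < V1) (hβ : 0 < β) (hJ : 0 < J)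
    (μR : ℕ → ℝ)
    (hμ : ∀ R, μR R = σbar / Real.sqrt Kbar
      + Real.sqrt V1 / (Kbar : ℝ) ^ ((1 + β) / 2)
        * ∑ r ∈ Finset.Icc 2 R, (2 : ℝ) ^ (-((1 + β) * ((r : ℝ) - 1) / 2)))
    (q : ℕ → ℕ → ℝ)
    (hq1 : ∀ R, q R 1 = σbar / (Real.sqrt Kbar * μR R))
    (hq : ∀ R, ∀ r ∈ Finset.Icc 2 R,
      q R r = Real.sqrt V1 /
        ((Kbar : ℝ) ^ ((1 + β) / 2)
          * (2 : ℝ) ^ ((1 + β) * ((r : ℝ) - 1) / 2) * μR R))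
    (C : ℝ → ℕ → ℝ)
    (hC : ∀ t R, C t R = J * ∑ r ∈ Finset.Icc 1 R,
      q R r * (t + (Kbar : ℝ) * 2 ^ (r - 1))) :
    (β ≤ 1 →
      Filter.Tendsto (fun R => C τ R / C 0 R) Filter.atTop (nhds 1)) ∧
    (1 < β → ∃ dinf : ℝ, 0 < dinf ∧
      Filter.Tendsto
        (fun R => (Kbar : ℝ) * ∑ r ∈ Finset.Icc 1 R, q R r * 2 ^ (r - 1))
        Filter.atTop (nhds dinf) ∧
      Filter.Tendsto (fun R => C τ R / C 0 R) Filter.atTop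
        (nhds (1 + τ / dinf))) := by
  have hK0 : (0:ℝ) < (Kbar : ℝ) := by exact_mod_cast Nat.lt_of_lt_of_le Nat.zero_lt_one hKbar
  have hsK : 0 < Real.sqrt Kbar := Real.sqrt_pos.mpr hK0
  have hKB : 0 < (Kbar : ℝ) ^ ((1 + β) / 2) := Real.rpow_pos_of_pos hK0 _
  set a1 : ℝ := σbar / Real.sqrt Kbar with ha1def
  have ha1 : 0 < a1 := div_pos hσ hsK
  set cA : ℝ := Real.sqrt V1 / (Kbar : ℝ) ^ ((1 + β) / 2) with hcAdef
  have hcA : 0 < cA := div_pos (Real.sqrt_pos.mpr hV) hKB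
  set x : ℝ := (2:ℝ) ^ (-((1 + β) / 2)) with hxdef
  have hx0 : 0 < x := Real.rpow_pos_of_pos two_pos _
  have hx1 : x < 1 := Real.rpow_lt_one_of_one_lt_of_neg one_lt_two (by nlinarith)
  set y : ℝ := 2 * x with hydef
  have hy0 : 0 < y := by positivity
  -- rewriting of the exponential terms
  have hterm : ∀ r : ℕ, 1 ≤ r →
      (2:ℝ) ^ (-((1 + β) * ((r : ℝ) - 1) / 2)) = x ^ (r - 1) := by
    intro r hr
    have hc : ((r - 1 : ℕ) : ℝ) = (r : ℝ) - 1 := by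
      rw [Nat.cast_sub hr, Nat.cast_one]
    have he : -((1 + β) * ((r : ℝ) - 1) / 2)
        = (-((1 + β) / 2)) * ((r - 1 : ℕ) : ℝ) := by rw [hc]; ring
    rw [he, Real.rpow_mul (by norm_num : (0:ℝ) ≤ 2), Real.rpow_natCast, hxdef]
  have hterm' : ∀ r : ℕ, 1 ≤ r →
      (2:ℝ) ^ ((1 + β) * ((r : ℝ) - 1) / 2) = (x ^ (r - 1))⁻¹ := by
    intro r hr
    rw [← hterm r hr, ← Real.rpow_neg (by norm_num : (0:ℝ) ≤ 2), neg_neg]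
  -- μR in terms of the geometric sum
  have hmG : ∀ R, μR R = a1 + cA * ∑ r ∈ Finset.Icc 2 R, x ^ (r - 1) := by
    intro R
    rw [hμ R]
    congr 1
    congr 1
    refine Finset.sum_congr rfl fun r hr => ?_
    exact hterm r (le_trans one_le_two (Finset.mem_Icc.mp hr).1)
  have hGnn : ∀ (z : ℝ), 0 ≤ z → ∀ R : ℕ,
      0 ≤ ∑ r ∈ Finset.Icc 2 R, z ^ (r - 1) := fun z hz R =>
    Finset.sum_nonneg fun _ _ => pow_nonneg hz _
  have hmpos : ∀ R, 0 < μR R := by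
    intro R
    have h := hGnn x hx0.le R
    rw [hmG R]; nlinarith
  -- q on levels ≥ 2
  have hqr : ∀ R, ∀ r ∈ Finset.Icc 2 R, q R r = cA * x ^ (r - 1) / μR R := by
    intro R r hr
    have h1r : (1:ℕ) ≤ r := le_trans one_le_two (Finset.mem_Icc.mp hr).1
    rw [hq R r hr, hterm' r h1r, hcAdef]
    have hxp : x ^ (r - 1) ≠ 0 := pow_ne_zero _ hx0.ne'
    field_simp
  have hIcc : ∀ R : ℕ, 1 ≤ R → Finset.Icc 1 R = insert 1 (Finset.Icc 2 R) := by
    intro R hR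
    ext r
    simp only [Finset.mem_Icc, Finset.mem_insert]
    omega
  have hnot : ∀ R : ℕ, (1:ℕ) ∉ Finset.Icc 2 R := by intro R; simp
  -- sum of the allocation is one
  have hsum1 : ∀ R : ℕ, 1 ≤ R → ∑ r ∈ Finset.Icc 1 R, q R r = 1 := by
    intro R hR
    rw [hIcc R hR, Finset.sum_insert (hnot R), hq1 R]
    have h2 : ∑ r ∈ Finset.Icc 2 R, q R r
        = cA * (∑ r ∈ Finset.Icc 2 R, x ^ (r - 1)) / μR R := by
      rw [Finset.mul_sum, Finset.sum_div]
      exact Finset.sum_congr rfl (hqr R)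
    rw [h2, ← div_div, ← ha1def, ← add_div, ← hmG R, div_self (hmpos R).ne']
  -- weighted sum
  have hsum2 : ∀ R : ℕ, 1 ≤ R → ∑ r ∈ Finset.Icc 1 R, q R r * 2 ^ (r - 1)
      = (a1 + cA * ∑ r ∈ Finset.Icc 2 R, y ^ (r - 1)) / μR R := by
    intro R hR
    rw [hIcc R hR, Finset.sum_insert (hnot R), hq1 R]
    have h2 : ∑ r ∈ Finset.Icc 2 R, q R r * 2 ^ (r - 1)
        = cA * (∑ r ∈ Finset.Icc 2 R, y ^ (r - 1)) / μR R := by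
      rw [Finset.mul_sum, Finset.sum_div]
      refine Finset.sum_congr rfl fun r hr => ?_
      rw [hqr R r hr, hydef, mul_pow]
      ring
    rw [h2]
    norm_num
    rw [← div_div, ← ha1def, ← add_div, add_div]
  -- cost formula
  have hCf : ∀ t : ℝ, ∀ R : ℕ, 1 ≤ R → C t R = J * (t + (Kbar:ℝ) *
      ((a1 + cA * ∑ r ∈ Finset.Icc 2 R, y ^ (r - 1)) / μR R)) := by
    intro t R hR
    rw [hC t R]
    congr 1
    have hsplit : ∀ r ∈ Finset.Icc 1 R,
        q R r * (t + (Kbar:ℝ) * 2 ^ (r - 1))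
          = t * q R r + (Kbar:ℝ) * (q R r * 2 ^ (r - 1)) := fun r _ => by ring
    rw [Finset.sum_congr rfl hsplit, Finset.sum_add_distrib, ← Finset.mul_sum,
      ← Finset.mul_sum, hsum1 R hR, hsum2 R hR, mul_one]
  -- positivity of D
  have hDpos : ∀ R : ℕ, 1 ≤ R → 0 < (Kbar:ℝ) *
      ((a1 + cA * ∑ r ∈ Finset.Icc 2 R, y ^ (r - 1)) / μR R) := by
    intro R hR
    have h := hGnn y hy0.le R
    exact mul_pos hK0 (div_pos (by nlinarith) (hmpos R))
  -- ratio formula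
  have hratio : ∀ R : ℕ, 1 ≤ R → C τ R / C 0 R = 1 + τ /
      ((Kbar:ℝ) * ((a1 + cA * ∑ r ∈ Finset.Icc 2 R, y ^ (r - 1)) / μR R)) := by
    intro R hR
    rw [hCf τ R hR, hCf 0 R hR, zero_add, mul_div_mul_left _ _ hJ.ne',
      add_div, div_self (hDpos R hR).ne', add_comm]
  -- convergence of μR
  have hGt : Tendsto (fun R : ℕ => ∑ r ∈ Finset.Icc 2 R, x ^ (r - 1)) atTop
      (nhds (x / (1 - x))) := geom_Icc_tendsto hx0.le hx1
  have hμt : Tendsto μR atTop (nhds (a1 + cA * (x / (1 - x)))) := by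
    have h := (hGt.const_mul cA).const_add a1
    exact h.congr fun R => (hmG R).symm
  have hxr : 0 ≤ x / (1 - x) := div_nonneg hx0.le (by linarith)
  have hminf : 0 < a1 + cA * (x / (1 - x)) := by nlinarith
  have hμle : ∀ R, μR R ≤ a1 + cA * (x / (1 - x)) := by
    intro R
    have hle : (∑ r ∈ Finset.Icc 2 R, x ^ (r - 1)) ≤ x / (1 - x) :=
      (geom_Icc_mono hx0.le).ge_of_tendsto hGt R
    rw [hmG R]; nlinarith
  constructor
  · -- case β ≤ 1
    intro hβ1
    have hhalf : (2:ℝ) ^ (-(1:ℝ)) ≤ x := by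
      rw [hxdef]
      exact (Real.rpow_le_rpow_left_iff one_lt_two).mpr (by linarith)
    have hy1 : (1:ℝ) ≤ y := by
      have h2 : (2:ℝ) ^ (-(1:ℝ)) = 1 / 2 := by
        rw [Real.rpow_neg_one]; norm_num
      rw [h2] at hhalf
      rw [hydef]; linarith
    have hHlb : ∀ R : ℕ, ((R:ℝ) - 1) ≤ ∑ r ∈ Finset.Icc 2 R, y ^ (r - 1) := by
      intro R
      have step1 : ((R:ℝ) - 1) ≤ ((R - 1 : ℕ) : ℝ) := by
        rcases Nat.eq_zero_or_pos R with h | h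
        · subst h; norm_num
        · rw [Nat.cast_sub h, Nat.cast_one]
      have hcard : (Finset.Icc 2 R).card = R - 1 := by rw [Nat.card_Icc]; omega
      have step2 : ((R - 1 : ℕ) : ℝ) ≤ ∑ r ∈ Finset.Icc 2 R, y ^ (r - 1) := by
        calc ((R - 1 : ℕ) : ℝ) = ∑ _r ∈ Finset.Icc 2 R, (1:ℝ) := by
              rw [Finset.sum_const, hcard, nsmul_eq_mul, mul_one]
          _ ≤ ∑ r ∈ Finset.Icc 2 R, y ^ (r - 1) :=
              Finset.sum_le_sum fun r _ => one_le_pow₀ hy1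
      linarith
    have hDtop : Tendsto (fun R : ℕ => (Kbar:ℝ) *
        ((a1 + cA * ∑ r ∈ Finset.Icc 2 R, y ^ (r - 1)) / μR R)) atTop atTop := by
      have hlin : Tendsto (fun R : ℕ => (Kbar:ℝ) *
          ((a1 + cA * ((R:ℝ) - 1)) / (a1 + cA * (x / (1 - x))))) atTop atTop := by
        apply Tendsto.const_mul_atTop hK0
        apply Tendsto.atTop_div_const hminf
        apply tendsto_atTop_add_const_left
        apply Tendsto.const_mul_atTop hcA
        apply tendsto_atTop_add_const_right
        exact tendsto_natCast_atTop_atTop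
      refine tendsto_atTop_mono (fun R => ?_) hlin
      have hH := hGnn y hy0.le R
      have hnum : a1 + cA * ((R:ℝ) - 1) ≤ a1 + cA * ∑ r ∈ Finset.Icc 2 R, y ^ (r - 1) := by
        nlinarith [hHlb R]
      have hnum2 : 0 ≤ a1 + cA * ∑ r ∈ Finset.Icc 2 R, y ^ (r - 1) := by nlinarith
      exact mul_le_mul_of_nonneg_left
        (div_le_div₀ hnum2 hnum (hmpos R) (hμle R)) hK0.le
    have hτ0 : Tendsto (fun R : ℕ => τ / ((Kbar:ℝ) *
        ((a1 + cA * ∑ r ∈ Finset.Icc 2 R, y ^ (r - 1)) / μR R))) atTop (nhds 0) :=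
      Tendsto.div_atTop tendsto_const_nhds hDtop
    have hfin : Tendsto (fun R : ℕ => 1 + τ / ((Kbar:ℝ) *
        ((a1 + cA * ∑ r ∈ Finset.Icc 2 R, y ^ (r - 1)) / μR R))) atTop (nhds 1) := by
      have h := hτ0.const_add 1
      rwa [add_zero] at h
    refine hfin.congr' ?_
    filter_upwards [eventually_ge_atTop 1] with R hR
    exact (hratio R hR).symm
  · -- case β > 1
    intro hβ1
    have hy1 : y < 1 := by
      have hhalf : x < (2:ℝ) ^ (-(1:ℝ)) := by
        rw [hxdef]
        exact (Real.rpow_lt_rpow_left_iff one_lt_two).mpr (by linarith)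
      have h2 : (2:ℝ) ^ (-(1:ℝ)) = 1 / 2 := by
        rw [Real.rpow_neg_one]; norm_num
      rw [h2] at hhalf
      rw [hydef]; linarith
    have hHt : Tendsto (fun R : ℕ => ∑ r ∈ Finset.Icc 2 R, y ^ (r - 1)) atTop
        (nhds (y / (1 - y))) := geom_Icc_tendsto hy0.le hy1
    have hyr : 0 ≤ y / (1 - y) := div_nonneg hy0.le (by linarith)
    refine ⟨(Kbar:ℝ) * ((a1 + cA * (y / (1 - y))) / (a1 + cA * (x / (1 - x)))),
      mul_pos hK0 (div_pos (by nlinarith) hminf), ?_, ?_⟩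
    · have hDt : Tendsto (fun R : ℕ => (Kbar:ℝ) *
          ((a1 + cA * ∑ r ∈ Finset.Icc 2 R, y ^ (r - 1)) / μR R)) atTop
          (nhds ((Kbar:ℝ) * ((a1 + cA * (y / (1 - y))) / (a1 + cA * (x / (1 - x)))))) :=
        (((hHt.const_mul cA).const_add a1).div hμt hminf.ne').const_mul _
      refine hDt.congr' ?_
      filter_upwards [eventually_ge_atTop 1] with R hR
      rw [hsum2 R hR]
    · have hdinf : (0:ℝ) < (Kbar:ℝ) *
          ((a1 + cA * (y / (1 - y))) / (a1 + cA * (x / (1 - x)))) :=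
        mul_pos hK0 (div_pos (by nlinarith) hminf)
      have hDt : Tendsto (fun R : ℕ => (Kbar:ℝ) *
          ((a1 + cA * ∑ r ∈ Finset.Icc 2 R, y ^ (r - 1)) / μR R)) atTop
          (nhds ((Kbar:ℝ) * ((a1 + cA * (y / (1 - y))) / (a1 + cA * (x / (1 - x)))))) :=
        (((hHt.const_mul cA).const_add a1).div hμt hminf.ne').const_mul _
      have hτt : Tendsto (fun R : ℕ => 1 + τ / ((Kbar:ℝ) *
          ((a1 + cA * ∑ r ∈ Finset.Icc 2 R, y ^ (r - 1)) / μR R))) atTop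
          (nhds (1 + τ / ((Kbar:ℝ) * ((a1 + cA * (y / (1 - y))) / (a1 + cA * (x / (1 - x))))))) :=
        (Tendsto.div tendsto_const_nhds hDt hdinf.ne').const_add 1
      refine hτt.congr' ?_
      filter_upwards [eventually_ge_atTop 1] with R hR
      exact (hratio R hR).symm
end
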